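/- arXiv:1910.05000 — 3 statements merged into one kernel-verified Lean document; each statement's English description precedes it below -/
import Mathlib

section
/- Let X be ℓp for some 1 ≤ p < ∞, or c₀, endowed with the coordinatewise product, and let w = (wₙ)ₙ≥₁ be a bounded sequence of nonzero complex numbers (so that the weighted backward shift B_w is a bounded operator on X). Then the following are equivalent: (i) B_w is hypercyclic on X; (ii) B_w supports a hypercyclic algebra; (iii) there exists a strictly increasing sequence of integers (n_k) such that |w₁⋯w_{n_k}| → +∞. -/
open Filter Topology

/-- The weighted backward shift: `(B_w x)ₙ = w_{n+1} x_{n+1}`. -/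
def Bw (w : ℕ → ℂ) (x : ℕ → ℂ) : ℕ → ℂ := fun n => w (n + 1) * x (n + 1)

/-- Membership in `ℓp`. -/
def Memlp (p : ℝ) (x : ℕ → ℂ) : Prop := Summable fun n => ‖x n‖ ^ p

/-- The `ℓp` distance. -/
noncomputable def lpDist (p : ℝ) (x y : ℕ → ℂ) : ℝ :=
  (∑' n : ℕ, ‖x n - y n‖ ^ p) ^ (1 / p)

/-- Membership in `c₀`. -/
def Memc0 (x : ℕ → ℂ) : Prop := Tendsto x atTop (𝓝 (0 : ℂ))

/-- `x` is hypercyclic for `B_w` on `ℓp`. -/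
def HClp (p : ℝ) (w : ℕ → ℂ) (x : ℕ → ℂ) : Prop :=
  Memlp p x ∧ ∀ y : ℕ → ℂ, Memlp p y → ∀ ε : ℝ, 0 < ε →
    ∃ n : ℕ, lpDist p ((Bw w)^[n] x) y < ε

/-- `x` is hypercyclic for `B_w` on `c₀`. -/
def HCc0 (w : ℕ → ℂ) (x : ℕ → ℂ) : Prop :=
  Memc0 x ∧ ∀ y : ℕ → ℂ, Memc0 y → ∀ ε : ℝ, 0 < ε →
    ∃ n : ℕ, ∀ k : ℕ, ‖(Bw w)^[n] x k - y k‖ < ε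

/-- `B_w` supports a hypercyclic algebra on `ℓp` (with the coordinatewise product). -/
def HCAlgLp (p : ℝ) (w : ℕ → ℂ) : Prop :=
  ∃ A : NonUnitalSubalgebra ℂ (ℕ → ℂ), (∀ x ∈ A, Memlp p x) ∧
    (∃ x ∈ A, x ≠ 0) ∧ ∀ x ∈ A, x ≠ 0 → HClp p w x

/-- `B_w` supports a hypercyclic algebra on `c₀` (with the coordinatewise product). -/
def HCAlgC0 (w : ℕ → ℂ) : Prop :=
  ∃ A : NonUnitalSubalgebra ℂ (ℕ → ℂ), (∀ x ∈ A, Memc0 x) ∧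
    (∃ x ∈ A, x ≠ 0) ∧ ∀ x ∈ A, x ≠ 0 → HCc0 w x

/-- There is a strictly increasing sequence `(n_k)` along which `|w₁ ⋯ w_{n_k}| → ∞`. -/
def ShiftCond (w : ℕ → ℂ) : Prop :=
  ∃ nk : ℕ → ℕ, StrictMono nk ∧
    Tendsto (fun k => ∏ i ∈ Finset.Icc 1 (nk k), ‖w i‖) atTop atTop

/-!
If `x` is hypercyclic then some `B_wⁿ x` approximates a large multiple of `e₀`; since
`(B_wⁿ x)₀ = w₁⋯wₙ xₙ` and `x` is bounded, the products `|w₁⋯wₙ|` are unbounded, which gives (iii).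

Conversely, under (iii) we build a single vector `x`, summable and bounded by `1`, such that
`P(x)` is hypercyclic for every nonzero polynomial `P` without constant term; the algebra
generated by `x` is then a hypercyclic algebra. Write `P = Xᵐ Q` with `Q(0) ≠ 0`. The vector `x`
is made of disjoint blocks, one for each pair `(m, y)` of an exponent and a finitely supported
target from a countable dense family, every pair recurring infinitely often. The block for
`(m, y)` sits at a position `n` where the weight products are large, and carries the `m`-th roots
of `yⱼ / (w_{j+1}⋯w_{n+j})`, so that `B_wⁿ (xᵐ) = y` on it. Its entries are tiny, hence
`B_wⁿ P(x) ≈ Q(0) y` there, and the later blocks are so small that even amplified by `‖B_w‖ⁿ`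
they contribute almost nothing. The approximation holds in `ℓ¹`, so in `ℓp` and in `c₀` as well.
-/

open Polynomial

section Weights

variable (w : ℕ → ℂ)

def weightProd (j r : ℕ) : ℂ := ∏ i ∈ Finset.Ioc j r, w i

noncomputable def weightNorm (n : ℕ) : ℝ := ∏ i ∈ Finset.Icc 1 n, ‖w i‖

variable {w}

lemma iterate_Bw_apply (x : ℕ → ℂ) (n j : ℕ) :
    (Bw w)^[n] x j = weightProd w j (j + n) * x (j + n) := by
  induction n generalizing x with
  | zero => simp [weightProd]
  | succ n ih =>
    rw [Function.iterate_succ_apply, ih, Bw, weightProd, weightProd, ← add_assoc,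
      Finset.prod_Ioc_succ_top (Nat.le_add_right j n), mul_assoc]

lemma norm_weightProd_mul_weightNorm {j r : ℕ} (h : j ≤ r) :
    ‖weightProd w j r‖ * weightNorm w j = weightNorm w r := by
  have hIcc (n : ℕ) : Finset.Icc 1 n = Finset.Ioc 0 n := Finset.Icc_add_one_left_eq_Ioc 0 n
  rw [weightProd, weightNorm, weightNorm, norm_prod, hIcc, hIcc, mul_comm,
    Finset.prod_Ioc_consecutive _ (Nat.zero_le j) h]

lemma weightNorm_pos (hw : ∀ n, 1 ≤ n → w n ≠ 0) (n : ℕ) : 0 < weightNorm w n :=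
  Finset.prod_pos fun i hi => norm_pos_iff.2 (hw i (Finset.mem_Icc.1 hi).1)

lemma weightNorm_nonneg (n : ℕ) : 0 ≤ weightNorm w n :=
  Finset.prod_nonneg fun _ _ => norm_nonneg _

lemma weightProd_ne_zero (hw : ∀ n, 1 ≤ n → w n ≠ 0) (j r : ℕ) : weightProd w j r ≠ 0 :=
  Finset.prod_ne_zero_iff.2 fun i hi => hw i (by grind)

lemma norm_weightProd_le {C : ℝ} (hb : ∀ n, ‖w n‖ ≤ C) (j n : ℕ) :
    ‖weightProd w j (j + n)‖ ≤ C ^ n := by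
  rw [weightProd, norm_prod]
  calc ∏ i ∈ Finset.Ioc j (j + n), ‖w i‖ ≤ ∏ _i ∈ Finset.Ioc j (j + n), C :=
        Finset.prod_le_prod (fun _ _ => norm_nonneg _) fun i _ => hb i
    _ = C ^ n := by simp

lemma weightNorm_add_le {C : ℝ} (hb : ∀ n, ‖w n‖ ≤ C) (a d : ℕ) :
    weightNorm w (a + d) ≤ C ^ d * weightNorm w a := by
  rw [← norm_weightProd_mul_weightNorm (Nat.le_add_right a d)]
  gcongr
  · exact weightNorm_nonneg a
  · exact norm_weightProd_le hb a d

lemma norm_iterate_Bw_apply_zero (x : ℕ → ℂ) (n : ℕ) :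
    ‖(Bw w)^[n] x 0‖ = weightNorm w n * ‖x n‖ := by
  rw [iterate_Bw_apply, norm_mul, zero_add, ← norm_weightProd_mul_weightNorm (Nat.zero_le n)]
  simp [weightNorm]

end Weights

section Necessity

variable {w x : ℕ → ℂ} {p C : ℝ}

lemma shiftCond_of_not_bddAbove (h : ¬BddAbove (Set.range (weightNorm w))) : ShiftCond w := by
  have hfreq (k : ℕ) : ∃ᶠ n in atTop, (k : ℝ) ≤ weightNorm w n := by
    refine not_not.1 fun hev => h ?_
    simp only [Filter.not_frequently, not_le] at hev
    exact (isBoundedUnder_of_eventually_le (hev.mono fun _ => le_of_lt)).bddAbove_range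
  obtain ⟨φ, hφ, hle⟩ := extraction_forall_of_frequently hfreq
  exact ⟨φ, hφ, tendsto_atTop_mono hle tendsto_natCast_atTop_atTop⟩

lemma not_bddAbove_weightNorm (hx : Memc0 x) (h : ∀ a : ℂ, ∃ n, ‖(Bw w)^[n] x 0 - a‖ < 1) :
    ¬BddAbove (Set.range (weightNorm w)) := by
  rintro ⟨B, hB⟩
  obtain ⟨M, hM⟩ := (tendsto_zero_iff_norm_tendsto_zero.1 hx).bddAbove_range
  obtain ⟨n, hn⟩ := h ((B * M + 1 : ℝ) : ℂ)
  have horbit : ‖(Bw w)^[n] x 0‖ ≤ B * M := by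
    rw [norm_iterate_Bw_apply_zero]
    exact mul_le_mul (hB ⟨n, rfl⟩) (hM ⟨n, rfl⟩) (norm_nonneg _)
      ((weightNorm_nonneg n).trans (hB ⟨n, rfl⟩))
  have htarget : B * M + 1 ≤ ‖((B * M + 1 : ℝ) : ℂ)‖ := by
    rw [Complex.norm_real, Real.norm_eq_abs]
    exact le_abs_self _
  linarith [norm_sub_norm_le ((B * M + 1 : ℝ) : ℂ) ((Bw w)^[n] x 0),
    norm_sub_rev ((B * M + 1 : ℝ) : ℂ) ((Bw w)^[n] x 0)]

lemma HCc0.shiftCond (hx : HCc0 w x) : ShiftCond w := by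
  refine shiftCond_of_not_bddAbove (not_bddAbove_weightNorm hx.1 fun a => ?_)
  have hsingle : Memc0 (Pi.single 0 a) :=
    tendsto_const_nhds.congr' (eventually_atTop.2 ⟨1, fun n hn => by
      rw [Pi.single_eq_of_ne (by omega)]⟩)
  obtain ⟨n, hn⟩ := hx.2 _ hsingle 1 one_pos
  exact ⟨n, by simpa using hn 0⟩

lemma Memlp.memc0 (hp : 0 < p) (hx : Memlp p x) : Memc0 x := by
  have h := hx.tendsto_atTop_zero.rpow_const (p := p⁻¹) (Or.inr (by positivity))
  rw [Real.zero_rpow (by positivity)] at h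
  rw [Memc0, tendsto_zero_iff_norm_tendsto_zero]
  exact h.congr fun n => Real.rpow_rpow_inv (norm_nonneg _) hp.ne'

lemma Memlp.iterate_Bw (hp : 0 ≤ p) (hb : ∀ n, ‖w n‖ ≤ C) (hx : Memlp p x) (n : ℕ) :
    Memlp p ((Bw w)^[n] x) := by
  have hC : 0 ≤ C := (norm_nonneg _).trans (hb 0)
  refine Summable.of_nonneg_of_le (fun j => by positivity) (fun j => ?_)
    (((summable_nat_add_iff n).2 hx).mul_left ((C ^ n) ^ p))
  rw [iterate_Bw_apply, norm_mul, Real.mul_rpow (norm_nonneg _) (norm_nonneg _)]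
  gcongr
  exact norm_weightProd_le hb j n

lemma lpDist_triangle (hp : 1 ≤ p) {u v z : ℕ → ℂ} (huv : Summable fun j => ‖u j - v j‖ ^ p)
    (hvz : Summable fun j => ‖v j - z j‖ ^ p) :
    (Summable fun j => ‖u j - z j‖ ^ p) ∧ lpDist p u z ≤ lpDist p u v + lpDist p v z := by
  obtain ⟨hs, hle⟩ := Real.Lp_add_le_tsum_of_nonneg hp (fun j => norm_nonneg (u j - v j))
    (fun j => norm_nonneg (v j - z j)) huv hvz
  have hpt (j : ℕ) : ‖u j - z j‖ ^ p ≤ (‖u j - v j‖ + ‖v j - z j‖) ^ p :=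
    Real.rpow_le_rpow (norm_nonneg _) (norm_sub_le_norm_sub_add_norm_sub _ _ _) (by linarith)
  have hs' : Summable fun j => ‖u j - z j‖ ^ p :=
    hs.of_nonneg_of_le (fun j => by positivity) hpt
  exact ⟨hs', le_trans (Real.rpow_le_rpow (tsum_nonneg fun j => by positivity)
    (hs'.tsum_le_tsum hpt hs) (by positivity)) hle⟩

lemma norm_sub_le_lpDist (hp : 0 < p) {u v : ℕ → ℂ} (h : Summable fun j => ‖u j - v j‖ ^ p)
    (j : ℕ) : ‖u j - v j‖ ≤ lpDist p u v :=
  calc ‖u j - v j‖ = (‖u j - v j‖ ^ p) ^ (1 / p) := by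
        rw [one_div, Real.rpow_rpow_inv (norm_nonneg _) hp.ne']
    _ ≤ lpDist p u v := Real.rpow_le_rpow (by positivity)
        (h.le_tsum j fun _ _ => by positivity) (by positivity)

lemma HClp.shiftCond (hp : 1 ≤ p) (hb : ∀ n, ‖w n‖ ≤ C) (hx : HClp p w x) : ShiftCond w := by
  have hp0 : 0 < p := by linarith
  refine shiftCond_of_not_bddAbove (not_bddAbove_weightNorm (hx.1.memc0 hp0) fun a => ?_)
  have hsingle : Memlp p (Pi.single 0 a) := summable_of_ne_finset_zero (s := {0}) fun n hn => by
    rw [Pi.single_eq_of_ne (Finset.notMem_singleton.1 hn), norm_zero, Real.zero_rpow hp0.ne']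
  obtain ⟨n, hn⟩ := hx.2 _ hsingle 1 one_pos
  have hsum := (lpDist_triangle hp (v := 0) (by simpa [Memlp] using hx.1.iterate_Bw hp0.le hb n)
    (by simpa [Memlp] using hsingle)).1
  exact ⟨n, by simpa using (norm_sub_le_lpDist hp0 hsum 0).trans_lt hn⟩

end Necessity

section Approximation

open TopologicalSpace

variable {w u z : ℕ → ℂ} {c : ℂ} {p : ℝ}

noncomputable def target (l : List ℕ) (j : ℕ) : ℂ :=
  if h : j < l.length then denseSeq ℂ l[j] else 0

lemma target_eq_zero {l : List ℕ} {j : ℕ} (h : l.length ≤ j) : target l j = 0 :=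
  dif_neg (by omega)

lemma exists_target_near (hc : c ≠ 0) (z : ℕ → ℂ) (L : ℕ) {ρ : ℝ} (hρ : 0 < ρ) :
    ∃ l : List ℕ, l.length = L ∧ ∀ j < L, ‖c * target l j - z j‖ < ρ := by
  have hc' : 0 < ‖c‖ := norm_pos_iff.2 hc
  choose i hi using fun j => Metric.denseRange_iff.1 (denseRange_denseSeq ℂ) (z j / c)
    (ρ / ‖c‖) (by positivity)
  refine ⟨(List.range L).map i, by simp, fun j hj => ?_⟩
  have htarget : target ((List.range L).map i) j = denseSeq ℂ (i j) := by simp [target, hj]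
  rw [htarget, show c * denseSeq ℂ (i j) - z j = c * (denseSeq ℂ (i j) - z j / c) by
    field_simp, norm_mul, ← dist_eq_norm, dist_comm]
  calc ‖c‖ * dist (z j / c) (denseSeq ℂ (i j)) < ‖c‖ * (ρ / ‖c‖) := by gcongr; exact hi j
    _ = ρ := by field_simp

noncomputable def recurrentEnum (α : Type*) [Nonempty α] [Countable α] (k : ℕ) : α :=
  (exists_surjective_nat α).choose k.unpair.2

lemma frequently_recurrentEnum_eq {α : Type*} [Nonempty α] [Countable α] (a : α) :
    ∃ᶠ k in atTop, recurrentEnum α k = a := by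
  obtain ⟨i, hi⟩ := (exists_surjective_nat α).choose_spec a
  refine frequently_atTop.2 fun K => ⟨Nat.pair K i, Nat.left_le_pair K i, ?_⟩
  rw [recurrentEnum, Nat.unpair_pair, hi]

def OrbitApproximates (w u : ℕ → ℂ) (c : ℂ) : Prop :=
  ∀ l : List ℕ, ∀ η > 0, ∃ n, (Summable fun j => ‖(Bw w)^[n] u j - c * target l j‖) ∧
    ∑' j, ‖(Bw w)^[n] u j - c * target l j‖ < η

lemma OrbitApproximates.hcc0 (h : OrbitApproximates w u c) (hc : c ≠ 0) (hu : Memc0 u) :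
    HCc0 w u := by
  refine ⟨hu, fun z hz ε hε => ?_⟩
  obtain ⟨L, hL⟩ := eventually_atTop.1
    ((tendsto_zero_iff_norm_tendsto_zero.1 hz).eventually_lt_const (half_pos hε))
  obtain ⟨l, rfl, hl⟩ := exists_target_near hc z L (half_pos hε)
  obtain ⟨n, hs, hlt⟩ := h l (ε / 2) (half_pos hε)
  refine ⟨n, fun j => ?_⟩
  have horbit := (hs.le_tsum j fun _ _ => norm_nonneg _).trans_lt hlt
  have htarget : ‖c * target l j - z j‖ < ε / 2 := by
    rcases lt_or_ge j l.length with hj | hj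
    · exact hl j hj
    · simpa [target_eq_zero hj] using hL j hj
  calc _ ≤ ‖(Bw w)^[n] u j - c * target l j‖ + ‖c * target l j - z j‖ :=
        norm_sub_le_norm_sub_add_norm_sub _ _ _
    _ < ε := by linarith

lemma lpDist_lt_of_tsum_lt (hp : 0 < p) {u v : ℕ → ℂ} {ε : ℝ} (hε : 0 < ε)
    (h : ∑' j, ‖u j - v j‖ ^ p < ε ^ p) : lpDist p u v < ε :=
  calc lpDist p u v < (ε ^ p) ^ (1 / p) :=
        Real.rpow_lt_rpow (tsum_nonneg fun _ => by positivity) h (by positivity)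
    _ = ε := by rw [one_div, Real.rpow_rpow_inv hε.le hp.ne']

lemma exists_target_lpDist_lt (hp : 1 ≤ p) (hc : c ≠ 0) (hz : Memlp p z) {ε : ℝ} (hε : 0 < ε) :
    ∃ l : List ℕ, (Summable fun j => ‖c * target l j - z j‖ ^ p) ∧
      lpDist p (fun j => c * target l j) z < ε := by
  have hp0 : 0 < p := by linarith
  have hθ : 0 < ε ^ p := by positivity
  obtain ⟨L, hL⟩ :=
    ((tendsto_sum_nat_add fun j => ‖z j‖ ^ p).eventually_lt_const (half_pos hθ)).exists
  set ρ := min 1 (ε ^ p / 2 / (L + 1))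
  obtain ⟨l, rfl, hl⟩ := exists_target_near hc z L (show 0 < ρ by positivity)
  have htail (j : ℕ) : ‖c * target l (j + l.length) - z (j + l.length)‖ ^ p =
      ‖z (j + l.length)‖ ^ p := by
    rw [target_eq_zero (by omega), mul_zero, zero_sub, norm_neg]
  have hs : Summable fun j => ‖c * target l j - z j‖ ^ p :=
    (summable_nat_add_iff l.length).1 (by simpa only [htail] using (summable_nat_add_iff _).2 hz)
  have hhead : ∑ j ∈ Finset.range l.length, ‖c * target l j - z j‖ ^ p ≤ l.length * ρ := by
    refine (Finset.sum_le_card_nsmul _ _ ρ fun j hj => ?_).trans_eq (by simp)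
    have hj := hl j (Finset.mem_range.1 hj)
    exact (Real.rpow_le_self_of_le_one (norm_nonneg _) (hj.le.trans (min_le_left _ _)) hp).trans
      hj.le
  have hρ : (l.length : ℝ) * ρ ≤ ε ^ p / 2 := by
    calc (l.length : ℝ) * ρ ≤ (l.length + 1) * (ε ^ p / 2 / (l.length + 1)) := by
          gcongr
          · linarith
          · exact min_le_right _ _
      _ = ε ^ p / 2 := by field_simp
  refine ⟨l, hs, lpDist_lt_of_tsum_lt hp0 hε ?_⟩
  rw [← hs.sum_add_tsum_nat_add l.length, tsum_congr htail]
  linarith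

lemma OrbitApproximates.hclp (hp : 1 ≤ p) (h : OrbitApproximates w u c) (hc : c ≠ 0)
    (hu : Memlp p u) : HClp p w u := by
  have hp0 : 0 < p := by linarith
  refine ⟨hu, fun z hz ε hε => ?_⟩
  obtain ⟨l, hlz, htarget⟩ := exists_target_lpDist_lt hp hc hz (half_pos hε)
  obtain ⟨n, hs, hlt⟩ := h l (min 1 ((ε / 2) ^ p)) (by positivity)
  have hpt (j : ℕ) : ‖(Bw w)^[n] u j - c * target l j‖ ^ p ≤ ‖(Bw w)^[n] u j - c * target l j‖ :=
    Real.rpow_le_self_of_le_one (norm_nonneg _)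
      ((hs.le_tsum j fun _ _ => norm_nonneg _).trans (hlt.le.trans (min_le_left _ _))) hp
  have hsp : Summable fun j => ‖(Bw w)^[n] u j - c * target l j‖ ^ p :=
    hs.of_nonneg_of_le (fun _ => by positivity) hpt
  have horbit : lpDist p ((Bw w)^[n] u) (fun j => c * target l j) < ε / 2 :=
    lpDist_lt_of_tsum_lt hp0 (half_pos hε)
      ((hsp.tsum_le_tsum hpt hs).trans_lt (hlt.trans_le (min_le_right _ _)))
  exact ⟨n, (lpDist_triangle hp hsp hlz).2.trans_lt (by linarith)⟩

end Approximation

lemma Polynomial.exists_norm_eval_sub_eval_zero_le {𝕜 : Type*} [NormedField 𝕜] [ProperSpace 𝕜]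
    (Q : 𝕜[X]) : ∃ S, 0 ≤ S ∧ ∀ t : 𝕜, ‖t‖ ≤ 1 → ‖Q.eval t - Q.eval 0‖ ≤ S * ‖t‖ := by
  obtain ⟨R, hR⟩ : X ∣ Q - C (Q.eval 0) := X_dvd_iff.2 (by simp [coeff_zero_eq_eval_zero])
  obtain ⟨S, hS⟩ := (isCompact_closedBall (0 : 𝕜) 1).exists_bound_of_continuousOn
    R.continuous.continuousOn
  refine ⟨S, (norm_nonneg _).trans (hS 0 (Metric.mem_closedBall_self zero_le_one)),
    fun t ht => ?_⟩
  have heval := congrArg (eval t) hR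
  simp only [eval_sub, eval_C, eval_mul, eval_X] at heval
  rw [heval, norm_mul, mul_comm]
  exact mul_le_mul_of_nonneg_right (hS t (mem_closedBall_zero_iff.2 ht)) (norm_nonneg _)

lemma Polynomial.exists_eq_X_pow_mul {R : Type*} [CommRing R] {P : R[X]} (hP : P ≠ 0)
    (h0 : P.eval 0 = 0) : ∃ m Q, 0 < m ∧ Q.eval 0 ≠ 0 ∧ P = X ^ m * Q := by
  obtain ⟨Q, hPQ, hQ⟩ := exists_eq_pow_rootMultiplicity_mul_and_not_dvd P hP 0
  simp only [map_zero, sub_zero, X_dvd_iff, coeff_zero_eq_eval_zero] at hPQ hQ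
  exact ⟨_, Q, (rootMultiplicity_pos hP).2 h0, hQ, hPQ⟩

lemma exists_eq_eval_of_mem_adjoin {x u : ℕ → ℂ} (hu : u ∈ NonUnitalAlgebra.adjoin ℂ {x}) :
    ∃ P : ℂ[X], P.eval 0 = 0 ∧ u = fun r => P.eval (x r) := by
  induction hu using NonUnitalAlgebra.adjoin_induction with
  | mem u hu => exact ⟨X, eval_X, by rw [Set.mem_singleton_iff.1 hu]; simp⟩
  | zero => exact ⟨0, eval_zero, by ext; simp⟩
  | add u v _ _ hu hv =>
    obtain ⟨P, hP, rfl⟩ := hu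
    obtain ⟨Q, hQ, rfl⟩ := hv
    exact ⟨P + Q, by simp [hP, hQ], by ext; simp⟩
  | mul u v _ _ hu hv =>
    obtain ⟨P, hP, rfl⟩ := hu
    obtain ⟨Q, hQ, rfl⟩ := hv
    exact ⟨P * Q, by simp [hP, hQ], by ext; simp⟩
  | smul a u _ hu =>
    obtain ⟨P, hP, rfl⟩ := hu
    exact ⟨a • P, by simp [hP], by ext; simp⟩

lemma exists_subalgebra_of_forall_eval {Mem HC : (ℕ → ℂ) → Prop} {x : ℕ → ℂ} (hx : x ≠ 0)
    (hMem : ∀ P : ℂ[X], P.eval 0 = 0 → Mem fun r => P.eval (x r))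
    (hHC : ∀ P : ℂ[X], P ≠ 0 → P.eval 0 = 0 → HC fun r => P.eval (x r)) :
    ∃ A : NonUnitalSubalgebra ℂ (ℕ → ℂ), (∀ u ∈ A, Mem u) ∧ (∃ u ∈ A, u ≠ 0) ∧
      ∀ u ∈ A, u ≠ 0 → HC u := by
  refine ⟨NonUnitalAlgebra.adjoin ℂ {x}, fun u hu => ?_,
    ⟨x, NonUnitalAlgebra.self_mem_adjoin_singleton ℂ x, hx⟩, fun u hu hu0 => ?_⟩
  · obtain ⟨P, hP0, rfl⟩ := exists_eq_eval_of_mem_adjoin hu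
    exact hMem P hP0
  · obtain ⟨P, hP0, rfl⟩ := exists_eq_eval_of_mem_adjoin hu
    exact hHC P (by rintro rfl; exact hu0 (by ext; simp)) hP0

lemma summable_sigma_of_sum_le {α : Type*} {β : α → Type*} [∀ a, Fintype (β a)]
    {f : (Σ a, β a) → ℝ} {b : α → ℝ} (hf : ∀ s, 0 ≤ f s) (hfb : ∀ a, ∑ i, f ⟨a, i⟩ ≤ b a)
    (hb : Summable b) : Summable f ∧ ∑' s, f s ≤ ∑' a, b a := by
  have hfb' (a : α) : ∑' i, f ⟨a, i⟩ ≤ b a := by rw [tsum_fintype]; exact hfb a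
  have hinner : Summable fun a => ∑' i, f ⟨a, i⟩ :=
    hb.of_nonneg_of_le (fun a => tsum_nonneg fun i => hf _) hfb'
  have hs : Summable f := (summable_sigma_of_nonneg hf).2 ⟨fun a => .of_finite, hinner⟩
  exact ⟨hs, (hs.tsum_sigma' fun a => .of_finite).trans_le (hinner.tsum_le_tsum hfb' hb)⟩

lemma ShiftCond.exists_peak {w : ℕ → ℂ} {C : ℝ} (hC : 1 ≤ C) (hb : ∀ n, ‖w n‖ ≤ C)
    (h : ShiftCond w) (M : ℝ) (N L : ℕ) : ∃ n, N ≤ n ∧ ∀ j < L, M ≤ weightNorm w (n + j) := by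
  obtain ⟨φ, hφ, htend⟩ := h
  obtain ⟨k, hk, hφk⟩ := ((htend.eventually_ge_atTop (M * C ^ L)).and
    (hφ.tendsto_atTop.eventually_ge_atTop (N + L))).exists
  refine ⟨φ k - L, by omega, fun j hj => ?_⟩
  have hpeak : weightNorm w (φ k) ≤ weightNorm w (φ k - L + j) * C ^ L :=
    calc weightNorm w (φ k) = weightNorm w (φ k - L + j + (L - j)) := by congr 1; omega
      _ ≤ C ^ (L - j) * weightNorm w (φ k - L + j) := weightNorm_add_le hb _ _
      _ ≤ weightNorm w (φ k - L + j) * C ^ L := by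
        rw [mul_comm]
        gcongr
        · exact weightNorm_nonneg _
        · omega
  exact le_of_mul_le_mul_right (hk.trans hpeak) (by positivity)

section Blocks

variable {w : ℕ → ℂ} {C : ℝ} {m L : ℕ → ℕ} {y : ℕ → ℕ → ℂ}

-- `2⁻¹ ^ k` makes late blocks negligible, `C⁻¹ ^ N` absorbs the amplification `‖B_w‖ⁿ ≤ Cⁿ`
-- of the orbit at any block placed before `N`, and `(L k + 1)⁻¹` bounds the mass of block `k`.
noncomputable def blockBound (C : ℝ) (L : ℕ → ℕ) (k N : ℕ) : ℝ :=
  2⁻¹ ^ k * C⁻¹ ^ N / (L k + 1)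

lemma blockBound_nonneg (hC : 0 ≤ C) (L : ℕ → ℕ) (k N : ℕ) : 0 ≤ blockBound C L k N := by
  unfold blockBound; positivity

lemma blockBound_le (hC : 1 ≤ C) (L : ℕ → ℕ) (k N : ℕ) : blockBound C L k N ≤ 2⁻¹ ^ k := by
  have hCN : C⁻¹ ^ N ≤ 1 := pow_le_one₀ (by positivity) (inv_le_one_of_one_le₀ hC)
  rw [blockBound, div_le_iff₀ (by positivity)]
  calc (2 : ℝ)⁻¹ ^ k * C⁻¹ ^ N ≤ 2⁻¹ ^ k * 1 := by gcongr
    _ ≤ 2⁻¹ ^ k * (L k + 1) := by gcongr; linarith [(L k).cast_nonneg (α := ℝ)]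

lemma mul_blockBound_le (hC : 1 ≤ C) (L : ℕ → ℕ) (k : ℕ) {N N' : ℕ} (hN : N' ≤ N) :
    L k * blockBound C L k N ≤ 2⁻¹ ^ k * C⁻¹ ^ N' := by
  have hCN : C⁻¹ ^ N ≤ C⁻¹ ^ N' :=
    pow_le_pow_of_le_one (by positivity) (inv_le_one_of_one_le₀ hC) hN
  rw [blockBound, mul_div_assoc', div_le_iff₀ (by positivity)]
  calc (L k : ℝ) * (2⁻¹ ^ k * C⁻¹ ^ N) ≤ (L k + 1) * (2⁻¹ ^ k * C⁻¹ ^ N') := by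
        gcongr; linarith
    _ = _ := by ring

-- Block `k` occupies `[n k, n k + L k)`. The bound `N k` lies beyond all earlier blocks and is
-- fixed before `n k` is searched for, so the size of block `k` may depend on it but not on `n k`.
structure BlockPlacement (w : ℕ → ℂ) (C : ℝ) (m L : ℕ → ℕ) (y : ℕ → ℕ → ℂ) where
  n : ℕ → ℕ
  N : ℕ → ℕ
  N_le : ∀ k, N k ≤ n k
  lt_N_succ : ∀ k, n k + L k < N (k + 1)
  norm_mul_weightNorm_le : ∀ k, ∀ j < L k,
    ‖y k j‖ * weightNorm w j ≤ blockBound C L k (N k) ^ m k * weightNorm w (n k + j)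

lemma exists_blockPlacement (hC : 0 < C)
    (hpeak : ∀ (M : ℝ) (N L : ℕ), ∃ n, N ≤ n ∧ ∀ j < L, M ≤ weightNorm w (n + j)) :
    Nonempty (BlockPlacement w C m L y) := by
  choose f hfN hf using hpeak
  let M (k N : ℕ) : ℝ :=
    (∑ j ∈ Finset.range (L k), ‖y k j‖ * weightNorm w j) / blockBound C L k N ^ m k
  let N (k : ℕ) : ℕ := Nat.rec 0 (fun k Nk => f (M k Nk) Nk (L k) + L k + 1) k
  refine ⟨⟨fun k => f (M k (N k)) (N k) (L k), N, fun k => hfN _ _ _, fun k => by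
    simp only [N]; omega, fun k j hj => ?_⟩⟩
  have hbound : 0 < blockBound C L k (N k) ^ m k := by unfold blockBound; positivity
  have hreq := hf (M k (N k)) (N k) (L k) j hj
  rw [div_le_iff₀ hbound] at hreq
  calc ‖y k j‖ * weightNorm w j ≤ ∑ i ∈ Finset.range (L k), ‖y k i‖ * weightNorm w i :=
        Finset.single_le_sum (f := fun i => ‖y k i‖ * weightNorm w i)
          (fun i _ => mul_nonneg (norm_nonneg _) (weightNorm_nonneg i)) (Finset.mem_range.2 hj)
    _ ≤ _ := by linarith

namespace BlockPlacement

variable (B : BlockPlacement w C m L y)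

lemma n_add_L_lt_N {k k' : ℕ} (h : k < k') : B.n k + L k < B.N k' := by
  induction k' with
  | zero => omega
  | succ k' ih =>
    rcases Nat.lt_succ_iff_lt_or_eq.1 h with h | rfl
    · have := ih h
      have := B.N_le k'
      have := B.lt_N_succ k'
      omega
    · exact B.lt_N_succ k

lemma n_add_L_le_of_le {k k' : ℕ} (h : k' ≤ k) : B.n k' + L k' ≤ B.n k + L k := by
  rcases h.lt_or_eq with h | rfl
  · have := B.n_add_L_lt_N h
    have := B.N_le k
    omega
  · rfl

def pos (s : Σ k, Fin (L k)) : ℕ := B.n s.1 + s.2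

lemma pos_mk (k : ℕ) (j : Fin (L k)) : B.pos ⟨k, j⟩ = B.n k + j := rfl

lemma pos_injective : Function.Injective B.pos := by
  rintro ⟨k, j⟩ ⟨k', j'⟩ h
  simp only [pos] at h
  obtain rfl : k = k' := by
    by_contra hne
    rcases Nat.lt_or_gt_of_ne hne with hlt | hlt
    · have := B.n_add_L_lt_N hlt
      have := B.N_le k'
      omega
    · have := B.n_add_L_lt_N hlt
      have := B.N_le k
      omega
  obtain rfl : j = j' := Fin.ext (by omega)
  rfl

noncomputable def entry (k j : ℕ) : ℂ := (y k j / weightProd w j (B.n k + j)) ^ ((m k : ℂ)⁻¹)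

noncomputable def vector : ℕ → ℂ := Function.extend B.pos (fun s => B.entry s.1 s.2) 0

lemma vector_add {k j : ℕ} (hj : j < L k) : B.vector (B.n k + j) = B.entry k j :=
  B.pos_injective.extend_apply _ _ ⟨k, ⟨j, hj⟩⟩

lemma vector_eq_zero {r : ℕ} (hr : r ∉ Set.range B.pos) : B.vector r = 0 :=
  Function.extend_apply' _ _ _ hr

lemma weightProd_mul_entry_pow (hw : ∀ n, 1 ≤ n → w n ≠ 0) {k : ℕ} (hm : m k ≠ 0) (j : ℕ) :
    weightProd w j (B.n k + j) * B.entry k j ^ m k = y k j := by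
  rw [entry, Complex.cpow_nat_inv_pow _ hm, mul_div_cancel₀ _ (weightProd_ne_zero hw _ _)]

lemma norm_entry_le (hw : ∀ n, 1 ≤ n → w n ≠ 0) (hC : 0 ≤ C) {k j : ℕ} (hm : m k ≠ 0)
    (hj : j < L k) : ‖B.entry k j‖ ≤ blockBound C L k (B.N k) := by
  have hπ := norm_weightProd_mul_weightNorm (w := w) (Nat.le_add_left j (B.n k))
  have hπ0 := norm_pos_iff.2 (weightProd_ne_zero hw j (B.n k + j))
  refine (pow_le_pow_iff_left₀ (norm_nonneg _) (blockBound_nonneg hC L k _) hm).1 ?_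
  rw [← norm_pow, entry, Complex.cpow_nat_inv_pow _ hm, norm_div, div_le_iff₀ hπ0]
  refine le_of_mul_le_mul_right ?_ (weightNorm_pos hw j)
  rw [mul_assoc, hπ]
  exact B.norm_mul_weightNorm_le k j hj

lemma norm_vector_le_one (hw : ∀ n, 1 ≤ n → w n ≠ 0) (hC : 1 ≤ C) (hm : ∀ k, m k ≠ 0)
    (r : ℕ) : ‖B.vector r‖ ≤ 1 := by
  by_cases hr : r ∈ Set.range B.pos
  · obtain ⟨⟨k, j⟩, rfl⟩ := hr
    rw [pos_mk, B.vector_add j.2]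
    exact (B.norm_entry_le hw (by linarith) (hm k) j.2).trans
      ((blockBound_le hC L k _).trans (pow_le_one₀ (by norm_num) (by norm_num)))
  · simp [B.vector_eq_zero hr]

noncomputable def tailNorm (k r : ℕ) : ℝ := if B.n k + L k ≤ r then ‖B.vector r‖ else 0

lemma tailNorm_nonneg (k r : ℕ) : 0 ≤ B.tailNorm k r := by
  unfold tailNorm; split_ifs <;> positivity

lemma summable_tailNorm_and_tsum_le (hw : ∀ n, 1 ≤ n → w n ≠ 0) (hC : 1 ≤ C)
    (hm : ∀ k, m k ≠ 0) (k : ℕ) :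
    Summable (B.tailNorm k) ∧ ∑' r, B.tailNorm k r ≤ 2⁻¹ ^ k * C⁻¹ ^ B.n k := by
  have hsupp (r : ℕ) (hr : r ∉ Set.range B.pos) : B.tailNorm k r = 0 := by
    simp [tailNorm, B.vector_eq_zero hr]
  let b (k' : ℕ) : ℝ := (if k + 1 ≤ k' then (2 : ℝ)⁻¹ ^ k' else 0) * C⁻¹ ^ B.n k
  have hfb (k' : ℕ) : ∑ j : Fin (L k'), B.tailNorm k (B.pos ⟨k', j⟩) ≤ b k' := by
    by_cases hk : k < k'
    · have hN := B.n_add_L_lt_N hk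
      have hNn := B.N_le k'
      calc ∑ j : Fin (L k'), B.tailNorm k (B.pos ⟨k', j⟩)
          ≤ ∑ _j : Fin (L k'), blockBound C L k' (B.N k') := by
            refine Finset.sum_le_sum fun j _ => ?_
            rw [tailNorm, pos_mk, if_pos (by omega), B.vector_add j.2]
            exact B.norm_entry_le hw (by linarith) (hm k') j.2
        _ = L k' * blockBound C L k' (B.N k') := by simp
        _ ≤ 2⁻¹ ^ k' * C⁻¹ ^ B.n k := mul_blockBound_le hC L k' (by omega)
        _ = b k' := by simp only [b, if_pos (Nat.succ_le_of_lt hk)]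
    · have hend := B.n_add_L_le_of_le (not_lt.1 hk)
      have hzero (j : Fin (L k')) : B.tailNorm k (B.pos ⟨k', j⟩) = 0 := by
        rw [tailNorm, pos_mk, if_neg (by have := j.2; omega)]
      simp only [hzero, Finset.sum_const_zero, b, if_neg (by omega : ¬k + 1 ≤ k'), zero_mul,
        le_refl]
  have hb : Summable b :=
    ((summable_geometric_of_lt_one (by norm_num) (by norm_num : (2 : ℝ)⁻¹ < 1)).of_nonneg_of_le
      (fun i => by split_ifs <;> positivity) (fun i => by split_ifs <;> simp)).mul_right _
  obtain ⟨hs, hle⟩ := summable_sigma_of_sum_le (fun s => B.tailNorm_nonneg k _) hfb hb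
  refine ⟨(B.pos_injective.summable_iff hsupp).1 hs, ?_⟩
  rw [← B.pos_injective.tsum_eq (Function.support_subset_iff'.2 hsupp)]
  refine hle.trans_eq ?_
  rw [tsum_mul_right, tsum_geometric_inv_two_ge, pow_succ]
  ring

lemma summable_norm_vector (hw : ∀ n, 1 ≤ n → w n ≠ 0) (hC : 1 ≤ C) (hm : ∀ k, m k ≠ 0) :
    Summable fun r => ‖B.vector r‖ := by
  refine (summable_nat_add_iff (B.n 0 + L 0)).1
    (((B.summable_tailNorm_and_tsum_le hw hC hm 0).1.comp_injective
      (add_left_injective (B.n 0 + L 0))).congr fun r => ?_)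
  simp [tailNorm]

variable {k : ℕ} {P Q : ℂ[X]} {SP SQ : ℝ}

lemma norm_orbit_error_le (hw : ∀ n, 1 ≤ n → w n ≠ 0) (hb : ∀ n, ‖w n‖ ≤ C) (hC : 1 ≤ C)
    (hm : ∀ k, m k ≠ 0) (hy : ∀ j, L k ≤ j → y k j = 0) (hPQ : P = X ^ m k * Q)
    (hSP : ∀ t : ℂ, ‖t‖ ≤ 1 → ‖P.eval t‖ ≤ SP * ‖t‖)
    (hSQ : ∀ t : ℂ, ‖t‖ ≤ 1 → ‖Q.eval t - Q.eval 0‖ ≤ SQ * ‖t‖) (hSQ0 : 0 ≤ SQ) (j : ℕ) :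
    ‖(Bw w)^[B.n k] (fun r => P.eval (B.vector r)) j - Q.eval 0 * y k j‖ ≤
      (if j < L k then SQ * ‖y k j‖ * 2⁻¹ ^ k else 0) +
        C ^ B.n k * SP * B.tailNorm k (B.n k + j) := by
  rw [iterate_Bw_apply, add_comm j]
  have ht1 := B.norm_vector_le_one hw hC hm (B.n k + j)
  by_cases hj : j < L k
  · have ht := B.norm_entry_le hw (by linarith) (hm k) hj
    have hroot := B.weightProd_mul_entry_pow hw (hm k) j
    rw [← B.vector_add hj] at ht hroot
    have herror : weightProd w j (B.n k + j) * P.eval (B.vector (B.n k + j)) - Q.eval 0 * y k j =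
        y k j * (Q.eval (B.vector (B.n k + j)) - Q.eval 0) := by
      rw [hPQ, eval_mul, eval_pow, eval_X, ← hroot]
      ring
    rw [herror, norm_mul, if_pos hj, tailNorm, if_neg (by omega), mul_zero, add_zero]
    calc ‖y k j‖ * ‖Q.eval (B.vector (B.n k + j)) - Q.eval 0‖
        ≤ ‖y k j‖ * (SQ * 2⁻¹ ^ k) := by
          gcongr
          exact (hSQ _ ht1).trans
            (mul_le_mul_of_nonneg_left (ht.trans (blockBound_le hC L k _)) hSQ0)
      _ = SQ * ‖y k j‖ * 2⁻¹ ^ k := by ring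
  · rw [hy j (not_lt.1 hj), mul_zero, sub_zero, if_neg hj, zero_add, tailNorm,
      if_pos (by omega), norm_mul, mul_assoc]
    exact mul_le_mul (by rw [add_comm]; exact norm_weightProd_le hb j _) (hSP _ ht1)
      (norm_nonneg _) (pow_nonneg (by linarith) _)

lemma orbit_error_summable_and_tsum_le (hw : ∀ n, 1 ≤ n → w n ≠ 0) (hb : ∀ n, ‖w n‖ ≤ C)
    (hC : 1 ≤ C) (hm : ∀ k, m k ≠ 0) (hy : ∀ j, L k ≤ j → y k j = 0) (hPQ : P = X ^ m k * Q)
    (hSP : ∀ t : ℂ, ‖t‖ ≤ 1 → ‖P.eval t‖ ≤ SP * ‖t‖)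
    (hSQ : ∀ t : ℂ, ‖t‖ ≤ 1 → ‖Q.eval t - Q.eval 0‖ ≤ SQ * ‖t‖) (hSP0 : 0 ≤ SP) (hSQ0 : 0 ≤ SQ) :
    (Summable fun j => ‖(Bw w)^[B.n k] (fun r => P.eval (B.vector r)) j - Q.eval 0 * y k j‖) ∧
      ∑' j, ‖(Bw w)^[B.n k] (fun r => P.eval (B.vector r)) j - Q.eval 0 * y k j‖ ≤
        (SQ * ∑ j ∈ Finset.range (L k), ‖y k j‖ + SP) * 2⁻¹ ^ k := by
  obtain ⟨htail, htail_le⟩ := B.summable_tailNorm_and_tsum_le hw hC hm k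
  set a : ℕ → ℝ := fun j => if j < L k then SQ * ‖y k j‖ * 2⁻¹ ^ k else 0
  set b : ℕ → ℝ := fun j => C ^ B.n k * SP * B.tailNorm k (B.n k + j)
  have ha_out (j : ℕ) (hj : j ∉ Finset.range (L k)) : a j = 0 := if_neg (by simpa using hj)
  have has : Summable a := summable_of_ne_finset_zero ha_out
  have ha : ∑' j, a j = SQ * (∑ j ∈ Finset.range (L k), ‖y k j‖) * 2⁻¹ ^ k := by
    rw [tsum_eq_sum ha_out, Finset.mul_sum, Finset.sum_mul]
    exact Finset.sum_congr rfl fun j hj => if_pos (Finset.mem_range.1 hj)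
  have hshift : Summable fun j => B.tailNorm k (B.n k + j) :=
    htail.comp_injective (add_right_injective _)
  have hbs : Summable b := hshift.mul_left _
  have hb_le : ∑' j, b j ≤ SP * 2⁻¹ ^ k := by
    have hCn : 0 < C ^ B.n k := pow_pos (by linarith) _
    calc ∑' j, b j = C ^ B.n k * SP * ∑' j, B.tailNorm k (B.n k + j) := tsum_mul_left
      _ ≤ C ^ B.n k * SP * (2⁻¹ ^ k * C⁻¹ ^ B.n k) :=
          mul_le_mul_of_nonneg_left ((tsum_comp_le_tsum_of_inj htail (B.tailNorm_nonneg k)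
            (add_right_injective _)).trans htail_le) (mul_nonneg hCn.le hSP0)
      _ = SP * 2⁻¹ ^ k * (C * C⁻¹) ^ B.n k := by ring
      _ = SP * 2⁻¹ ^ k := by rw [mul_inv_cancel₀ (by linarith), one_pow, mul_one]
  have hle := B.norm_orbit_error_le hw hb hC hm hy hPQ hSP hSQ hSQ0
  have hs := (has.add hbs).of_nonneg_of_le (fun _ => norm_nonneg _) hle
  refine ⟨hs, (hs.tsum_le_tsum hle (has.add hbs)).trans ?_⟩
  rw [has.tsum_add hbs, ha, add_mul]
  linarith

end BlockPlacement

end Blocks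

lemma summable_norm_eval {x : ℕ → ℂ} (hx : Summable fun r => ‖x r‖) (hx1 : ∀ r, ‖x r‖ ≤ 1)
    {P : ℂ[X]} (hP0 : P.eval 0 = 0) : Summable fun r => ‖P.eval (x r)‖ := by
  obtain ⟨S, -, hS⟩ := P.exists_norm_eval_sub_eval_zero_le
  exact (hx.mul_left S).of_nonneg_of_le (fun _ => norm_nonneg _) fun r => by
    simpa [hP0] using hS _ (hx1 r)

lemma memlp_of_summable_norm {p : ℝ} (hp : 1 ≤ p) {u : ℕ → ℂ}
    (hu : Summable fun r => ‖u r‖) : Memlp p u := by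
  refine hu.of_norm_bounded_eventually_nat ?_
  filter_upwards [hu.tendsto_atTop_zero.eventually_lt_const zero_lt_one] with r hr
  rw [Real.norm_eq_abs, abs_of_nonneg (by positivity)]
  exact Real.rpow_le_self_of_le_one (norm_nonneg _) hr.le hp

theorem ShiftCond.exists_orbitApproximates {w : ℕ → ℂ} {C : ℝ} (hw : ∀ n, 1 ≤ n → w n ≠ 0)
    (hb : ∀ n, ‖w n‖ ≤ C) (hC : 1 ≤ C) (h : ShiftCond w) :
    ∃ x : ℕ → ℂ, x ≠ 0 ∧ (Summable fun r => ‖x r‖) ∧ (∀ r, ‖x r‖ ≤ 1) ∧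
      ∀ P : ℂ[X], P ≠ 0 → P.eval 0 = 0 →
        ∃ c ≠ 0, OrbitApproximates w (fun r => P.eval (x r)) c := by
  let e := recurrentEnum (ℕ × List ℕ)
  have hm (k : ℕ) : (e k).1 + 1 ≠ 0 := Nat.succ_ne_zero _
  obtain ⟨B⟩ := exists_blockPlacement (w := w) (m := fun k => (e k).1 + 1)
    (L := fun k => (e k).2.length) (y := fun k => target (e k).2) (by linarith)
    (h.exists_peak hC hb)
  refine ⟨B.vector, ?_, B.summable_norm_vector hw hC hm, B.norm_vector_le_one hw hC hm,
    fun P hP hP0 => ?_⟩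
  · obtain ⟨l, hl, hl0⟩ := exists_target_near one_ne_zero (fun _ => 1) 1 one_pos
    have hl0' : target l 0 ≠ 0 := fun h0 => by simpa [h0] using hl0 0 one_pos
    obtain ⟨k, hk⟩ := (frequently_recurrentEnum_eq (0, l)).exists
    intro hx
    have hroot := B.weightProd_mul_entry_pow hw (hm k) 0
    rw [← B.vector_add (by simp [e, hk, hl]), hx] at hroot
    simp [e, hk] at hroot
    exact hl0' hroot.symm
  · obtain ⟨M, Q, hM, hQ0, hPQ⟩ := exists_eq_X_pow_mul hP hP0
    obtain ⟨SP, hSP0, hSP⟩ := P.exists_norm_eval_sub_eval_zero_le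
    obtain ⟨SQ, hSQ0, hSQ⟩ := Q.exists_norm_eval_sub_eval_zero_le
    refine ⟨Q.eval 0, hQ0, fun l η hη => ?_⟩
    have hsmall : ∀ᶠ k in atTop,
        (SQ * ∑ j ∈ Finset.range l.length, ‖target l j‖ + SP) * 2⁻¹ ^ k < η := by
      have := (tendsto_pow_atTop_nhds_zero_of_lt_one (by norm_num)
        (by norm_num : (2 : ℝ)⁻¹ < 1)).const_mul (SQ * ∑ j ∈ Finset.range l.length,
          ‖target l j‖ + SP)
      rw [mul_zero] at this
      exact this.eventually_lt_const hη
    obtain ⟨k, hk, hks⟩ := ((frequently_recurrentEnum_eq (M - 1, l)).and_eventually hsmall).exists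
    have hmk : (e k).1 + 1 = M := by simp only [e, hk]; omega
    obtain ⟨hs, hle⟩ := B.orbit_error_summable_and_tsum_le (k := k) hw hb hC hm
      (fun j => target_eq_zero) (by simpa only [hmk] using hPQ)
      (by simpa [hP0] using hSP) hSQ hSP0 hSQ0
    simp only [e, hk] at hs hle
    exact ⟨B.n k, hs, hle.trans_lt hks⟩

theorem ShiftCond.hcAlgLp {w : ℕ → ℂ} {C p : ℝ} (hw : ∀ n, 1 ≤ n → w n ≠ 0)
    (hb : ∀ n, ‖w n‖ ≤ C) (hC : 1 ≤ C) (hp : 1 ≤ p) (h : ShiftCond w) : HCAlgLp p w := by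
  obtain ⟨x, hx0, hx, hx1, happrox⟩ := h.exists_orbitApproximates hw hb hC
  have hmem (P : ℂ[X]) (hP0 : P.eval 0 = 0) : Memlp p fun r => P.eval (x r) :=
    memlp_of_summable_norm hp (summable_norm_eval hx hx1 hP0)
  refine exists_subalgebra_of_forall_eval hx0 hmem fun P hP hP0 => ?_
  obtain ⟨c, hc, hPc⟩ := happrox P hP hP0
  exact hPc.hclp hp hc (hmem P hP0)

theorem ShiftCond.hcAlgC0 {w : ℕ → ℂ} {C : ℝ} (hw : ∀ n, 1 ≤ n → w n ≠ 0)
    (hb : ∀ n, ‖w n‖ ≤ C) (hC : 1 ≤ C) (h : ShiftCond w) : HCAlgC0 w := by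
  obtain ⟨x, hx0, hx, hx1, happrox⟩ := h.exists_orbitApproximates hw hb hC
  have hmem (P : ℂ[X]) (hP0 : P.eval 0 = 0) : Memc0 fun r => P.eval (x r) :=
    tendsto_zero_iff_norm_tendsto_zero.2 (summable_norm_eval hx hx1 hP0).tendsto_atTop_zero
  refine exists_subalgebra_of_forall_eval hx0 hmem fun P hP hP0 => ?_
  obtain ⟨c, hc, hPc⟩ := happrox P hP hP0
  exact hPc.hcc0 hc (hmem P hP0)

/-- **Corollary.** On `ℓp` (`1 ≤ p < ∞`) or `c₀` with the coordinatewise product, for a bounded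
weight `w`: `B_w` is hypercyclic ⟺ `B_w` supports a hypercyclic algebra ⟺ `|w₁⋯w_{n_k}| → ∞`
along some strictly increasing sequence `(n_k)`. -/
theorem weighted_shift_lp_c0_hypercyclic_algebra_iff
    (w : ℕ → ℂ) (hw : ∀ n : ℕ, 1 ≤ n → w n ≠ 0)
    (hb : ∃ C : ℝ, ∀ n, ‖w n‖ ≤ C) :
    (∀ p : ℝ, 1 ≤ p →
      (((∃ x, HClp p w x) ↔ HCAlgLp p w) ∧ ((∃ x, HClp p w x) ↔ ShiftCond w))) ∧
    (((∃ x, HCc0 w x) ↔ HCAlgC0 w) ∧ ((∃ x, HCc0 w x) ↔ ShiftCond w)) := by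
  obtain ⟨C, hC⟩ := hb
  have hb' (n : ℕ) : ‖w n‖ ≤ max C 1 := (hC n).trans (le_max_left _ _)
  have hC1 : 1 ≤ max C 1 := le_max_right _ _
  refine ⟨fun p hp => ?_, ?_⟩
  · have hnec : (∃ x, HClp p w x) → ShiftCond w := fun ⟨x, hx⟩ => hx.shiftCond hp hb'
    have hsuff : ShiftCond w → HCAlgLp p w := fun h => h.hcAlgLp hw hb' hC1 hp
    have halg : HCAlgLp p w → ∃ x, HClp p w x :=
      fun ⟨_, _, ⟨x, hxA, hx0⟩, hA⟩ => ⟨x, hA x hxA hx0⟩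
    exact ⟨⟨hsuff ∘ hnec, halg⟩, ⟨hnec, halg ∘ hsuff⟩⟩
  · have hnec : (∃ x, HCc0 w x) → ShiftCond w := fun ⟨x, hx⟩ => hx.shiftCond
    have hsuff : ShiftCond w → HCAlgC0 w := fun h => h.hcAlgC0 hw hb' hC1
    have halg : HCAlgC0 w → ∃ x, HCc0 w x :=
      fun ⟨_, _, ⟨x, hxA, hx0⟩, hA⟩ => ⟨x, hA x hxA hx0⟩
    exact ⟨⟨hsuff ∘ hnec, halg⟩, ⟨hnec, halg ∘ hsuff⟩⟩
end

section
/- Every weighted backward shift B_w, where w = (wₙ)ₙ≥₁ is any sequence of nonzero complex numbers, acting on ω = ℂ^{ℕ₀} endowed with the coordinatewise product, supports a hypercyclic algebra. -/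
/-!
A Baire category argument produces `x ∈ ω` such that every `q(x) = (q (xⱼ))ⱼ` with `q(0) = 0`,
`q ≠ 0`, is hypercyclic; these sequences form the algebra. Since `(B_wⁿ y)ₖ = Wₙ(k) y_{k+n}`,
the task on each coordinate is to choose `ξ` with `W q(ξ)` close to a target `a`, for an
arbitrary weight `W ≠ 0`. Normalise `q = Xˢ + ∑_{s<i≤d} cᵢ Xⁱ`. If `|a/W|` is small, an `s`-th
root of `a/W` is an approximate solution; otherwise an exact root of `q = a/W` is, with `|ξ|ᵈ`
of order `|a/W|`. In both cases the error caused by moving `c_{s+1}, …, c_d` by at most `r` is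
at most `r |W| ∑_{s<i≤d} |ξ|ⁱ`, which stays small for an `r` depending only on bounds for the
coefficients and the targets, never on `W`. So countably many data, each giving a dense
open set, control all complex polynomials at once.
-/

open Filter Topology

open Finset TopologicalSpace
open scoped Polynomial

noncomputable section

namespace WeightedShift

def shiftWeight (w : ℕ → ℂ) (n k : ℕ) : ℂ := ∏ i ∈ range n, w (k + i + 1)

theorem Bw_iterate_apply (w : ℕ → ℂ) (n : ℕ) (x : ℕ → ℂ) (k : ℕ) :
    (Bw w)^[n] x k = shiftWeight w n k * x (k + n) := by
  induction n generalizing x with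
  | zero => simp [shiftWeight]
  | succ n ih =>
    rw [Function.iterate_succ_apply, ih]
    simp only [Bw, shiftWeight, prod_range_succ]
    ring_nf

theorem shiftWeight_ne_zero {w : ℕ → ℂ} (hw : ∀ n : ℕ, 1 ≤ n → w n ≠ 0) (n k : ℕ) :
    shiftWeight w n k ≠ 0 :=
  prod_ne_zero_iff.2 fun i _ => hw _ (by omega)

theorem Bw_iterate_smul (w : ℕ → ℂ) (n : ℕ) (a : ℂ) (x : ℕ → ℂ) :
    (Bw w)^[n] (a • x) = a • (Bw w)^[n] x := by
  funext k
  simp only [Bw_iterate_apply, Pi.smul_apply, smul_eq_mul]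
  ring

theorem dense_of_forall_exists_dist_lt {E : Type*} [PseudoMetricSpace E] {S : Set (ℕ → E)}
    (h : ∀ z : ℕ → E, ∀ N : ℕ, ∀ ε > 0, ∃ y ∈ S, ∀ k < N, dist (y k) (z k) < ε) :
    Dense S := by
  intro z
  choose y hyS hy using fun N : ℕ => h z N (1 / (N + 1)) Nat.one_div_pos_of_nat
  have hyz : Tendsto y atTop (𝓝 z) := tendsto_pi_nhds.2 fun k =>
    tendsto_iff_dist_tendsto_zero.2 <| squeeze_zero' (Eventually.of_forall fun _ => dist_nonneg)
      ((eventually_gt_atTop k).mono fun N hN => (hy N k hN).le)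
      tendsto_one_div_add_atTop_nhds_zero_nat
  exact mem_closure_of_tendsto hyz (Eventually.of_forall hyS)

def polySum (s d : ℕ) (c : ℕ → ℂ) (ξ : ℂ) : ℂ := ∑ i ∈ Icc s d, c i * ξ ^ i

def tailNormSum (s d : ℕ) (ξ : ℂ) : ℝ := ∑ i ∈ Ioc s d, ‖ξ‖ ^ i

def robustError (s d : ℕ) (c : ℕ → ℂ) (r : ℝ) (W a ξ : ℂ) : ℝ :=
  ‖W * polySum s d c ξ - a‖ + r * ‖W‖ * tailNormSum s d ξ

section Estimates

variable {s d : ℕ} {c : ℕ → ℂ} {ξ : ℂ}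

theorem polySum_eq_add (hsd : s ≤ d) :
    polySum s d c ξ = c s * ξ ^ s + ∑ i ∈ Ioc s d, c i * ξ ^ i :=
  (add_sum_Ioc_eq_sum_Icc hsd).symm

theorem norm_sum_mul_pow_le {S : Finset ℕ} {N : ℕ} (h : ∀ i ∈ S, ‖ξ‖ ^ i ≤ ‖ξ‖ ^ N) :
    ‖∑ i ∈ S, c i * ξ ^ i‖ ≤ (∑ i ∈ S, ‖c i‖) * ‖ξ‖ ^ N :=
  calc ‖∑ i ∈ S, c i * ξ ^ i‖ ≤ ∑ i ∈ S, ‖c i‖ * ‖ξ‖ ^ i :=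
        (norm_sum_le _ _).trans_eq (by simp only [norm_mul, norm_pow])
    _ ≤ ∑ i ∈ S, ‖c i‖ * ‖ξ‖ ^ N :=
        sum_le_sum fun i hi => mul_le_mul_of_nonneg_left (h i hi) (norm_nonneg _)
    _ = (∑ i ∈ S, ‖c i‖) * ‖ξ‖ ^ N := (sum_mul ..).symm

theorem tailNormSum_le {B : ℝ} (hB : 0 ≤ B) (h : ∀ i ∈ Ioc s d, ‖ξ‖ ^ i ≤ B) :
    tailNormSum s d ξ ≤ d * B := by
  refine (sum_le_card_nsmul _ _ B h).trans ?_
  rw [nsmul_eq_mul, Nat.card_Ioc]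
  gcongr
  exact_mod_cast Nat.sub_le d s

theorem tailNormSum_le_one_add_pow : tailNormSum s d ξ ≤ d * (1 + ‖ξ‖ ^ d) := by
  refine tailNormSum_le (by positivity) fun i hi => ?_
  rcases le_total ‖ξ‖ 1 with h | h
  · linarith [pow_le_one₀ (norm_nonneg ξ) h (n := i), pow_nonneg (norm_nonneg ξ) d]
  · linarith [pow_le_pow_right₀ h (mem_Ioc.1 hi).2]

theorem norm_polySum_sub_polySum_le {γ : ℕ → ℂ} {r : ℝ} (hsd : s ≤ d) (hs : γ s = c s)
    (h : ∀ i ∈ Ioc s d, ‖γ i - c i‖ ≤ r) :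
    ‖polySum s d γ ξ - polySum s d c ξ‖ ≤ r * tailNormSum s d ξ := by
  rw [polySum_eq_add hsd, polySum_eq_add hsd, hs, add_sub_add_left_eq_sub, ← sum_sub_distrib,
    tailNormSum, mul_sum]
  refine (norm_sum_le _ _).trans (sum_le_sum fun i hi => ?_)
  rw [← sub_mul, norm_mul, norm_pow]
  exact mul_le_mul_of_nonneg_right (h i hi) (by positivity)

theorem exists_polySum_eq (hsd : s ≤ d) (hd : 1 ≤ d) (hcd : c d ≠ 0) (v : ℂ) :
    ∃ ξ, polySum s d c ξ = v := by
  set p : ℂ[X] := ∑ i ∈ Icc s d, Polynomial.C (c i) * Polynomial.X ^ i - Polynomial.C v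
  have hp : p.coeff d = c d := by
    have hd0 : d ≠ 0 := by omega
    simp [p, Polynomial.coeff_C, hsd, hd0]
  have hdeg : 0 < p.degree :=
    (by exact_mod_cast hd : (0 : WithBot ℕ) < d).trans_le
      (Polynomial.le_degree_of_ne_zero (hp ▸ hcd))
  obtain ⟨ξ, hξ⟩ := Complex.exists_root hdeg
  refine ⟨ξ, sub_eq_zero.1 ?_⟩
  simpa [p, Polynomial.eval_finsetSum, polySum] using hξ

theorem norm_pow_le_of_polySum_eq {R κ : ℝ} {v : ℂ} (hsd : s ≤ d) (hd : 1 ≤ d)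
    (hR : ∑ i ∈ Ico s d, ‖c i‖ ≤ R) (hκ : 0 < κ) (hκd : κ ≤ ‖c d‖)
    (hξ : polySum s d c ξ = v) :
    ‖ξ‖ ^ d ≤ max 1 (2 * R / κ) ^ d + 2 * ‖v‖ / κ := by
  have hv : 0 ≤ 2 * ‖v‖ / κ := by positivity
  rcases le_or_gt ‖ξ‖ (max 1 (2 * R / κ)) with hle | hgt
  · linarith [pow_le_pow_left₀ (norm_nonneg ξ) hle d]
  have h1 : 1 ≤ ‖ξ‖ := (le_max_left _ _).trans hgt.le
  have hRξ : R ≤ κ * ‖ξ‖ / 2 := by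
    have := (le_max_right _ _).trans_lt hgt
    rw [div_lt_iff₀ hκ] at this
    linarith
  have hlead : c d * ξ ^ d = v - ∑ i ∈ Ico s d, c i * ξ ^ i := by
    rw [← hξ, polySum, Icc_eq_cons_Ico hsd, sum_cons]
    ring
  have hlow : ‖∑ i ∈ Ico s d, c i * ξ ^ i‖ ≤ R * ‖ξ‖ ^ (d - 1) :=
    (norm_sum_mul_pow_le fun i hi => pow_le_pow_right₀ h1 (by simp at hi; omega)).trans
      (mul_le_mul_of_nonneg_right hR (by positivity))
  have hpow : ‖ξ‖ * ‖ξ‖ ^ (d - 1) = ‖ξ‖ ^ d := by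
    rw [← pow_succ']
    congr 1
    omega
  have key : κ * ‖ξ‖ ^ d ≤ ‖v‖ + κ * ‖ξ‖ ^ d / 2 :=
    calc κ * ‖ξ‖ ^ d ≤ ‖c d * ξ ^ d‖ := by rw [norm_mul, norm_pow]; gcongr
      _ ≤ ‖v‖ + R * ‖ξ‖ ^ (d - 1) := by rw [hlead]; exact (norm_sub_le _ _).trans (by gcongr)
      _ ≤ ‖v‖ + κ * ‖ξ‖ / 2 * ‖ξ‖ ^ (d - 1) := by gcongr
      _ = ‖v‖ + κ * ‖ξ‖ ^ d / 2 := by rw [← hpow]; ring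
  have : ‖ξ‖ ^ d ≤ 2 * ‖v‖ / κ := by
    rw [le_div_iff₀ hκ]
    linarith
  linarith [pow_nonneg (zero_le_one.trans (le_max_left 1 (2 * R / κ))) d]

theorem robustError_le_of_pow_eq {R r : ℝ} {W a : ℂ} (hsd : s ≤ d) (hcs : c s = 1)
    (hR : ∑ i ∈ Ioc s d, ‖c i‖ ≤ R) (hr : 0 ≤ r) (hξ : ‖ξ‖ ≤ 1) (ha : W * ξ ^ s = a) :
    robustError s d c r W a ξ ≤ (R + r * d) * ‖a‖ * ‖ξ‖ := by
  have hpow : ∀ i ∈ Ioc s d, ‖ξ‖ ^ i ≤ ‖ξ‖ ^ (s + 1) := fun i hi =>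
    pow_le_pow_of_le_one (norm_nonneg _) hξ (mem_Ioc.1 hi).1
  have hna : ‖a‖ * ‖ξ‖ = ‖W‖ * ‖ξ‖ ^ (s + 1) := by
    rw [← ha, norm_mul, norm_pow, pow_succ]
    ring
  have hmain : ‖W * polySum s d c ξ - a‖ ≤ R * (‖a‖ * ‖ξ‖) := by
    rw [polySum_eq_add hsd, hcs, one_mul, mul_add, ha, add_sub_cancel_left, norm_mul, hna,
      mul_left_comm]
    gcongr
    exact (norm_sum_mul_pow_le hpow).trans (by gcongr)
  have htail : tailNormSum s d ξ ≤ d * ‖ξ‖ ^ (s + 1) := tailNormSum_le (by positivity) hpow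
  calc robustError s d c r W a ξ ≤ R * (‖a‖ * ‖ξ‖) + r * ‖W‖ * (d * ‖ξ‖ ^ (s + 1)) := by
        unfold robustError
        gcongr
    _ = (R + r * d) * ‖a‖ * ‖ξ‖ := by linear_combination (-(r * d)) * hna

theorem robustError_le_of_polySum_eq {R κ r : ℝ} {W a : ℂ} (hsd : s ≤ d) (hd : 1 ≤ d)
    (hR : ∑ i ∈ Ico s d, ‖c i‖ ≤ R) (hκ : 0 < κ) (hκd : κ ≤ ‖c d‖) (hr : 0 ≤ r)
    (ha : W * polySum s d c ξ = a) :
    robustError s d c r W a ξ ≤ r * d * (‖W‖ * (1 + max 1 (2 * R / κ) ^ d) + 2 * ‖a‖ / κ) := by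
  have hroot := norm_pow_le_of_polySum_eq (ξ := ξ) hsd hd hR hκ hκd rfl
  calc robustError s d c r W a ξ = r * ‖W‖ * tailNormSum s d ξ := by
        rw [robustError, ha, sub_self, norm_zero, zero_add]
    _ ≤ r * ‖W‖ * (d * (1 + (max 1 (2 * R / κ) ^ d + 2 * ‖polySum s d c ξ‖ / κ))) := by
        gcongr
        exact tailNormSum_le_one_add_pow.trans (by gcongr)
    _ = r * d * (‖W‖ * (1 + max 1 (2 * R / κ) ^ d) + 2 * ‖a‖ / κ) := by
        rw [← ha, norm_mul]
        ring

theorem exists_pos_mul_le_one_and_mul_lt {A B ε : ℝ} (hA : 0 ≤ A) (hB : 0 ≤ B) (hε : 0 < ε) :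
    ∃ r > 0, r * A ≤ 1 ∧ r * A * B < ε := by
  refine ⟨min (1 / (A + 1)) (ε / (A * B + 1)), by positivity, ?_, ?_⟩
  · calc min (1 / (A + 1)) (ε / (A * B + 1)) * A ≤ 1 / (A + 1) * A := by
          gcongr; exact min_le_left _ _
      _ ≤ 1 := by rw [div_mul_eq_mul_div, one_mul, div_le_one (by positivity)]; linarith
  · calc min (1 / (A + 1)) (ε / (A * B + 1)) * A * B ≤ ε / (A * B + 1) * (A * B) := by
          rw [mul_assoc]; gcongr; exact min_le_right _ _
      _ < ε := by
          rw [div_mul_eq_mul_div, div_lt_iff₀ (by positivity)]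
          nlinarith [mul_nonneg hA hB]

theorem exists_uniform_slack {R κ T ε : ℝ} (hs : 1 ≤ s) (hsd : s ≤ d) (hR : 0 ≤ R)
    (hκ : 0 < κ) (hT : 0 ≤ T) (hε : 0 < ε) :
    ∃ r > 0, ∀ c : ℕ → ℂ, c s = 1 → ∑ i ∈ Icc s d, ‖c i‖ ≤ R → κ ≤ ‖c d‖ →
      ∀ a W : ℂ, ‖a‖ ≤ T → W ≠ 0 → ∃ ξ, robustError s d c r W a ξ < ε := by
  set ρ := min 1 (ε / (2 * (T + 1) * (R + 1)))
  have hρ : 0 < ρ := by positivity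
  set K := T / ρ ^ s * (1 + max 1 (2 * R / κ) ^ d) + 2 * T / κ
  obtain ⟨r, hr, hrd, hrK⟩ :=
    exists_pos_mul_le_one_and_mul_lt (Nat.cast_nonneg d) (by positivity : 0 ≤ K) hε
  refine ⟨r, hr, fun c hcs hRc hκd a W ha hW => ?_⟩
  have hsub : ∀ S ⊆ Icc s d, ∑ i ∈ S, ‖c i‖ ≤ R := fun S hS =>
    (sum_le_sum_of_subset_of_nonneg hS fun _ _ _ => norm_nonneg _).trans hRc
  rcases le_or_gt ‖a / W‖ (ρ ^ s) with hsmall | hlarge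
  · obtain ⟨ξ, hξ⟩ := IsAlgClosed.exists_pow_nat_eq (a / W) (by omega : 0 < s)
    have hξρ : ‖ξ‖ ≤ ρ := (pow_le_pow_iff_left₀ (n := s) (norm_nonneg _) hρ.le (by omega)).1
      (by rw [← norm_pow, hξ]; exact hsmall)
    refine ⟨ξ, (robustError_le_of_pow_eq hsd hcs (hsub _ Ioc_subset_Icc_self) hr.le
      (hξρ.trans (min_le_left _ _)) (by rw [hξ]; field_simp)).trans_lt ?_⟩
    calc (R + r * d) * ‖a‖ * ‖ξ‖ ≤ (R + 1) * T * (ε / (2 * (T + 1) * (R + 1))) := by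
          gcongr
          exact hξρ.trans (min_le_right _ _)
      _ = T / (T + 1) * (ε / 2) := by field_simp
      _ < ε := by
          have : T / (T + 1) < 1 := (div_lt_one (by positivity)).2 (by linarith)
          nlinarith
  · obtain ⟨ξ, hξ⟩ := exists_polySum_eq hsd (by omega)
      (norm_pos_iff.1 (hκ.trans_le hκd)) (a / W)
    refine ⟨ξ, (robustError_le_of_polySum_eq hsd (by omega) (hsub _ Ico_subset_Icc_self) hκ hκd
      hr.le (by rw [hξ]; field_simp)).trans_lt (lt_of_le_of_lt ?_ hrK)⟩
    have hWT : ‖W‖ ≤ T / ρ ^ s := by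
      rw [le_div_iff₀ (by positivity)]
      rw [norm_div, lt_div_iff₀ (norm_pos_iff.2 hW)] at hlarge
      linarith
    refine mul_le_mul_of_nonneg_left (add_le_add ?_ (by gcongr)) (by positivity)
    exact mul_le_mul_of_nonneg_right hWT (by positivity)

end Estimates

/-- Coefficients and targets are stored as indices into `denseSeq ℂ`, so that there are only
countably many data. -/
structure Datum where
  s : ℕ
  d : ℕ
  coeffs : List ℕ
  m : ℕ
  targets : List ℕ
  tol : ℚ
  slack : ℚ

namespace Datum

instance : Countable Datum :=
  Function.Injective.countable
    (f := fun δ : Datum => (δ.s, δ.d, δ.coeffs, δ.m, δ.targets, δ.tol, δ.slack))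
    (by rintro ⟨⟩ ⟨⟩ h; simpa using h)

def coeff (δ : Datum) (i : ℕ) : ℂ := if i = δ.s then 1 else denseSeq ℂ (δ.coeffs.getD i 0)

def target (δ : Datum) (k : ℕ) : ℂ := denseSeq ℂ (δ.targets.getD k 0)

def error (δ : Datum) (W : ℂ) (k : ℕ) (ξ : ℂ) : ℝ :=
  robustError δ.s δ.d δ.coeff δ.slack W (δ.target k) ξ

def Solvable (δ : Datum) : Prop := ∀ W : ℂ, W ≠ 0 → ∀ k < δ.m, ∃ ξ, δ.error W k ξ < δ.tol

end Datum

def hitSet (w : ℕ → ℂ) (δ : Datum) : Set (ℕ → ℂ) :=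
  ⋃ n, {x | ∀ k < δ.m, δ.error (shiftWeight w n k) k (x (k + n)) < δ.tol}

theorem isOpen_hitSet (w : ℕ → ℂ) (δ : Datum) : IsOpen (hitSet w δ) := by
  refine isOpen_iUnion fun n => ?_
  have hset : {x : ℕ → ℂ | ∀ k < δ.m, δ.error (shiftWeight w n k) k (x (k + n)) < δ.tol} =
      ⋂ k ∈ Set.Iio δ.m, {x | δ.error (shiftWeight w n k) k (x (k + n)) < δ.tol} := by
    ext
    simp
  rw [hset]
  refine (Set.finite_Iio _).isOpen_biInter fun k _ => isOpen_lt ?_ continuous_const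
  simp only [Datum.error, robustError, polySum, tailNormSum]
  fun_prop

theorem dense_hitSet {w : ℕ → ℂ} (hw : ∀ n : ℕ, 1 ≤ n → w n ≠ 0) {δ : Datum}
    (hδ : δ.Solvable) : Dense (hitSet w δ) := by
  refine dense_of_forall_exists_dist_lt fun x₀ N ε hε => ?_
  have hsolve : ∀ k, ∃ ξ, k < δ.m → δ.error (shiftWeight w N k) k ξ < δ.tol := fun k => by
    by_cases hk : k < δ.m
    · obtain ⟨ξ, hξ⟩ := hδ _ (shiftWeight_ne_zero hw N k) k hk
      exact ⟨ξ, fun _ => hξ⟩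
    · exact ⟨0, fun h => absurd h hk⟩
  choose ξ hξ using hsolve
  refine ⟨fun j => if N ≤ j then ξ (j - N) else x₀ j, Set.mem_iUnion.2 ⟨N, fun k hk => ?_⟩,
    fun k hk => ?_⟩
  · simpa using hξ k hk
  · simpa [not_le.2 hk] using hε

theorem exists_forall_mem_hitSet {w : ℕ → ℂ} (hw : ∀ n : ℕ, 1 ≤ n → w n ≠ 0) :
    ∃ x, ∀ δ : Datum, δ.Solvable → x ∈ hitSet w δ := by
  obtain ⟨x, hx⟩ := (dense_iInter_of_isOpen (f := fun δ : {δ : Datum // δ.Solvable} => hitSet w δ)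
    (fun δ => isOpen_hitSet w δ) fun δ => dense_hitSet hw δ.2).nonempty
  exact ⟨x, fun δ hδ => Set.mem_iInter.1 hx ⟨δ, hδ⟩⟩

theorem exists_list_approx (f : ℕ → ℂ) (L : ℕ) {τ : ℝ} (hτ : 0 < τ) :
    ∃ l : List ℕ, ∀ i < L, ‖f i - denseSeq ℂ (l.getD i 0)‖ < τ := by
  choose idx hidx using fun i => (denseRange_denseSeq ℂ).exists_dist_lt (f i) hτ
  refine ⟨List.ofFn fun i : Fin L => idx i, fun i hi => ?_⟩
  simpa [List.getD_eq_getElem?_getD, hi, dist_eq_norm] using hidx i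

theorem sum_norm_le_of_forall_norm_sub_le {s d : ℕ} {γ c : ℕ → ℂ} {τ : ℝ} (hτ : 0 ≤ τ)
    (hτd : τ ≤ 1 / (d + 1)) (h : ∀ i ∈ Icc s d, ‖γ i - c i‖ ≤ τ) :
    ∑ i ∈ Icc s d, ‖c i‖ ≤ ∑ i ∈ Icc s d, ‖γ i‖ + 1 :=
  calc ∑ i ∈ Icc s d, ‖c i‖ ≤ ∑ i ∈ Icc s d, (‖γ i‖ + τ) := sum_le_sum fun i hi => by
        linarith [norm_sub_norm_le (c i) (γ i), norm_sub_rev (c i) (γ i), h i hi]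
    _ = ∑ i ∈ Icc s d, ‖γ i‖ + (d + 1 - s : ℕ) * τ := by
        rw [sum_add_distrib, sum_const, Nat.card_Icc, nsmul_eq_mul]
    _ ≤ ∑ i ∈ Icc s d, ‖γ i‖ + (d + 1) * (1 / (d + 1)) := by
        gcongr
        exact_mod_cast Nat.sub_le (d + 1) s
    _ = ∑ i ∈ Icc s d, ‖γ i‖ + 1 := by field_simp

theorem exists_solvable_datum {s d : ℕ} (hs : 1 ≤ s) (hsd : s ≤ d) {γ : ℕ → ℂ} (hγs : γ s = 1)
    (hγd : γ d ≠ 0) (z : ℕ → ℂ) (N : ℕ) {ε : ℝ} (hε : 0 < ε) :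
    ∃ δ : Datum, δ.Solvable ∧ δ.s = s ∧ δ.d = d ∧ δ.m = N ∧ (δ.tol : ℝ) < ε / 2 ∧
      (∀ k < N, ‖z k - δ.target k‖ < ε / 2) ∧ ∀ i ∈ Ioc s d, ‖γ i - δ.coeff i‖ ≤ δ.slack := by
  obtain ⟨e, he, heε⟩ := exists_rat_btwn (half_pos hε)
  obtain ⟨targetIdx, htarget⟩ := exists_list_approx z N (half_pos hε)
  have hγd' : 0 < ‖γ d‖ := norm_pos_iff.2 hγd
  obtain ⟨r₀, hr₀, hsolve⟩ := exists_uniform_slack (R := ∑ i ∈ Icc s d, ‖γ i‖ + 1)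
    (κ := ‖γ d‖ / 2) (T := ∑ k ∈ range N, ‖denseSeq ℂ (targetIdx.getD k 0)‖) (ε := e)
    hs hsd (by positivity) (by positivity) (by positivity) (by exact_mod_cast he)
  obtain ⟨r, hr, hrr₀⟩ := exists_rat_btwn hr₀
  set τ : ℝ := min r (min (1 / (d + 1)) (‖γ d‖ / 2))
  have hτ : 0 < τ := by positivity
  obtain ⟨coeffIdx, hcoeff⟩ := exists_list_approx γ (d + 1) hτ
  set δ : Datum := ⟨s, d, coeffIdx, N, targetIdx, e, r⟩
  have hclose : ∀ i ∈ Icc s d, ‖γ i - δ.coeff i‖ ≤ τ := fun i hi => by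
    by_cases his : i = s
    · simp [δ, Datum.coeff, his, hγs, hτ.le]
    · simpa [δ, Datum.coeff, his] using (hcoeff i (by simp at hi; omega)).le
  have hlead : ‖γ d‖ / 2 ≤ ‖δ.coeff d‖ := by
    have hτγ : τ ≤ ‖γ d‖ / 2 := (min_le_right _ _).trans (min_le_right _ _)
    linarith [norm_sub_norm_le (γ d) (δ.coeff d), hclose d (right_mem_Icc.2 hsd)]
  have hδ : δ.Solvable := fun W hW k hk => by
    obtain ⟨ξ, hξ⟩ := hsolve δ.coeff (if_pos rfl) (sum_norm_le_of_forall_norm_sub_le hτ.le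
      ((min_le_right _ _).trans (min_le_left _ _)) hclose) hlead _ W
      (single_le_sum (f := fun k => ‖denseSeq ℂ (targetIdx.getD k 0)‖) (fun _ _ => norm_nonneg _)
        (mem_range.2 hk)) hW
    refine ⟨ξ, lt_of_le_of_lt ?_ hξ⟩
    change robustError s d δ.coeff r W (denseSeq ℂ (targetIdx.getD k 0)) ξ ≤ _
    unfold robustError tailNormSum
    gcongr
  exact ⟨δ, hδ, rfl, rfl, rfl, heε, htarget, fun i hi =>
    (hclose i (Ioc_subset_Icc_self hi)).trans (min_le_left _ _)⟩

theorem dense_orbit_polySum {w x : ℕ → ℂ} (hx : ∀ δ : Datum, δ.Solvable → x ∈ hitSet w δ)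
    {s d : ℕ} (hs : 1 ≤ s) (hsd : s ≤ d) {γ : ℕ → ℂ} (hγs : γ s = 1) (hγd : γ d ≠ 0) :
    Dense (Set.range fun n : ℕ => (Bw w)^[n] fun j => polySum s d γ (x j)) := by
  refine dense_of_forall_exists_dist_lt fun z N ε hε => ?_
  obtain ⟨δ, hδ, rfl, rfl, rfl, htol, htarget, hcoeff⟩ :=
    exists_solvable_datum hs hsd hγs hγd z N hε
  obtain ⟨n, hn⟩ := Set.mem_iUnion.1 (hx δ hδ)
  refine ⟨_, ⟨n, rfl⟩, fun k hk => ?_⟩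
  set W := shiftWeight w n k
  set ξ := x (k + n)
  have hpert := norm_polySum_sub_polySum_le (ξ := ξ) hsd (hγs.trans (if_pos rfl).symm) hcoeff
  change dist ((Bw w)^[n] _ k) (z k) < ε
  rw [Bw_iterate_apply, dist_eq_norm]
  calc ‖W * polySum δ.s δ.d γ ξ - z k‖
      ≤ ‖W * polySum δ.s δ.d γ ξ - W * polySum δ.s δ.d δ.coeff ξ‖
        + ‖W * polySum δ.s δ.d δ.coeff ξ - δ.target k‖ + ‖δ.target k - z k‖ :=
        (norm_sub_le_norm_sub_add_norm_sub _ (δ.target k) _).trans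
          (by gcongr; exact norm_sub_le_norm_sub_add_norm_sub _ _ _)
    _ ≤ δ.error W k ξ + ‖z k - δ.target k‖ := by
        rw [← mul_sub, norm_mul, norm_sub_rev (δ.target k)]
        unfold Datum.error robustError
        linarith [mul_le_mul_of_nonneg_left hpert (norm_nonneg W)]
    _ < δ.tol + ε / 2 := add_lt_add (hn k hk) (htarget k hk)
    _ < ε := by linarith

theorem eval_eq_polySum (q : ℂ[X]) (ξ : ℂ) :
    q.eval ξ = polySum q.natTrailingDegree q.natDegree q.coeff ξ := by
  rw [Polynomial.eval_eq_sum_range, polySum]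
  refine (sum_subset (fun i hi => ?_) fun i hi hni => ?_).symm
  · simp only [mem_Icc, mem_range] at hi ⊢
    omega
  · simp only [mem_Icc, mem_range, not_and, not_le] at hi hni
    have : i < q.natTrailingDegree := by
      by_contra h
      have := hni (by omega)
      omega
    rw [Polynomial.coeff_eq_zero_of_lt_natTrailingDegree this, zero_mul]

theorem dense_orbit_eval {w x : ℕ → ℂ} (hx : ∀ δ : Datum, δ.Solvable → x ∈ hitSet w δ)
    {q : ℂ[X]} (hq : q ≠ 0) (h0 : q.coeff 0 = 0) :
    Dense (Set.range fun n : ℕ => (Bw w)^[n] fun j => q.eval (x j)) := by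
  set a := q.trailingCoeff
  have ha : a ≠ 0 := Polynomial.trailingCoeff_nonzero_iff_nonzero.2 hq
  have hs : 1 ≤ q.natTrailingDegree := Nat.one_le_iff_ne_zero.2 fun h =>
    (Polynomial.natTrailingDegree_eq_zero.1 h).elim hq (· h0)
  have hnormal := dense_orbit_polySum hx hs q.natTrailingDegree_le_natDegree
    (γ := fun i => a⁻¹ * q.coeff i) (inv_mul_cancel₀ ha)
    (mul_ne_zero (inv_ne_zero ha) (Polynomial.leadingCoeff_ne_zero.2 hq))
  have hscale : (fun j => q.eval (x j)) =
      a • fun j => polySum q.natTrailingDegree q.natDegree (fun i => a⁻¹ * q.coeff i) (x j) := by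
    funext j
    simp [eval_eq_polySum, polySum, mul_sum, ← mul_assoc, mul_inv_cancel₀ ha]
  simp_rw [hscale, Bw_iterate_smul]
  exact (Function.Surjective.denseRange fun y => ⟨a⁻¹ • y, smul_inv_smul₀ ha y⟩).comp hnormal
    (continuous_const_smul a)

theorem ne_zero_of_dense_orbit {w y : ℕ → ℂ}
    (hy : Dense (Set.range fun n : ℕ => (Bw w)^[n] y)) : y ≠ 0 := by
  rintro rfl
  have horbit : (fun n : ℕ => (Bw w)^[n] (0 : ℕ → ℂ)) = fun _ => 0 := by
    funext n k
    simp [Bw_iterate_apply]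
  rw [horbit, Set.range_const, dense_iff_closure_eq, closure_singleton] at hy
  exact one_ne_zero (Set.mem_singleton_iff.1 (hy ▸ Set.mem_univ (1 : ℕ → ℂ)))

def polyImages (x : ℕ → ℂ) : NonUnitalSubalgebra ℂ (ℕ → ℂ) where
  carrier := {y | ∃ q : ℂ[X], q.coeff 0 = 0 ∧ (fun j => q.eval (x j)) = y}
  add_mem' := by
    rintro _ _ ⟨p, hp, rfl⟩ ⟨q, hq, rfl⟩
    exact ⟨p + q, by simp [hp, hq], by funext; simp⟩
  zero_mem' := ⟨0, by simp, by funext; simp⟩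
  mul_mem' := by
    rintro _ _ ⟨p, hp, rfl⟩ ⟨q, hq, rfl⟩
    exact ⟨p * q, by simp [Polynomial.mul_coeff_zero, hp], by funext; simp⟩
  smul_mem' := by
    rintro c _ ⟨p, hp, rfl⟩
    exact ⟨c • p, by simp [hp], by funext; simp⟩

end WeightedShift

end

/-- **Theorem.** Every weighted backward shift on `ω = ℂ^{ℕ₀}` (with the product topology and
the coordinatewise product) supports a hypercyclic algebra. -/
theorem weighted_shift_omega_hypercyclic_algebra
    (w : ℕ → ℂ) (hw : ∀ n : ℕ, 1 ≤ n → w n ≠ 0) :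
    ∃ A : NonUnitalSubalgebra ℂ (ℕ → ℂ), (∃ x ∈ A, x ≠ 0) ∧
      ∀ x ∈ A, x ≠ 0 → Dense (Set.range fun n : ℕ => (Bw w)^[n] x) := by
  obtain ⟨x, hx⟩ := WeightedShift.exists_forall_mem_hitSet hw
  have hX : (fun j => (Polynomial.X : ℂ[X]).eval (x j)) = x := by
    funext
    simp
  refine ⟨WeightedShift.polyImages x, ⟨x, ⟨Polynomial.X, Polynomial.coeff_X_zero, hX⟩,
    WeightedShift.ne_zero_of_dense_orbit (hX ▸ WeightedShift.dense_orbit_eval hx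
      Polynomial.X_ne_zero Polynomial.coeff_X_zero)⟩, ?_⟩
  rintro _ ⟨q, h0, rfl⟩ hy
  exact WeightedShift.dense_orbit_eval hx (by rintro rfl; exact hy (by funext; simp)) h0
end

section
/- Let (a(p))_{p≥1} be any sequence of positive real numbers. Then there exists a sequence (A(p))_{p≥1} of pairwise disjoint subsets of ℕ such that: (i) each set A(p) has positive lower density; (ii) min A(p) ≥ a(p), and |n − n′| ≥ a(p) + a(q) whenever n ≠ n′ and (n, n′) ∈ A(p) × A(q); (iii) for every C > 0 there exists κ > 0 such that for all p ≠ q and all (n, n′) ∈ A(p) × A(q) with max(n, n′) ≥ κ, one has |n − n′| ≥ C. -/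
open Filter Topology

/-- The set `E ⊆ ℕ` has positive lower density. -/
def LowerDensPos (E : Set ℕ) : Prop :=
  0 < Filter.liminf (fun N : ℕ => ((E ∩ Set.Icc 0 N).ncard : ℝ) / (N + 1)) Filter.atTop

/-!
The sets are built inside the dyadic blocks `[2 ^ t, 2 ^ (t + 1))`. Block `t = 2 ^ p * (2 * j + 1)`
belongs to class `p`; there `A p` is the progression of step `2 b_p` (with `b_p = ⌈a p⌉₊`) that
keeps a margin `t + b_p` from both ends of the block. Points of distinct blocks are therefore more
than `t + t' + b_p + b_q` apart, which gives both separation properties, and since the class-`p`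
blocks recur with the bounded period `2 ^ (p + 1)`, each `A p` fills a fixed proportion of every
initial segment.
-/

lemma lowerDensPos_of_le_mul_ncard {E : Set ℕ} {u : ℕ → ℕ} {K : ℕ} (hu : Tendsto u atTop atTop)
    (hK : ∀ j, u (j + 1) ≤ K * (E ∩ Set.Iio (u j)).ncard) : LowerDensPos E := by
  have hu' : Tendsto (fun j => u (j + 1)) atTop atTop := hu.comp (tendsto_add_atTop_nat 1)
  have hK0 : 0 < K := by
    obtain ⟨j, hj⟩ := (hu'.eventually_gt_atTop 0).exists
    exact Nat.pos_of_mul_pos_right ((hK j).trans_lt' hj)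
  have hratio_le_one (N : ℕ) : ((E ∩ Set.Icc 0 N).ncard : ℝ) / (N + 1) ≤ 1 := by
    rw [div_le_one (by positivity)]
    have := Set.ncard_le_ncard (Set.inter_subset_right (s := E)) (Set.finite_Icc 0 N)
    rw [Set.ncard_Icc_nat] at this
    exact_mod_cast this
  refine (by positivity : (0 : ℝ) < 1 / K).trans_le
    (le_liminf_of_le (isCoboundedUnder_ge_of_le atTop hratio_le_one) ?_)
  filter_upwards [eventually_ge_atTop (u 0)] with N hN
  have hex : ∃ j, N < u (j + 1) := (hu'.eventually_gt_atTop N).exists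
  -- `j` is the last index with `u j ≤ N`
  have hj : u (Nat.find hex) ≤ N := by
    rcases h : Nat.find hex with _ | i
    · exact hN
    · exact not_lt.1 (Nat.find_min hex (h ▸ i.lt_succ_self))
  have hcount : N + 1 ≤ K * (E ∩ Set.Icc 0 N).ncard := by
    refine (Nat.find_spec hex).trans_le ((hK _).trans (Nat.mul_le_mul_left K ?_))
    refine Set.ncard_le_ncard (fun n hn => ⟨hn.1, Nat.zero_le n, ?_⟩)
      ((Set.finite_Icc 0 N).subset Set.inter_subset_right)
    exact (Set.mem_Iio.1 hn.2).le.trans hj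
  rw [le_div_iff₀ (by positivity), one_div_mul_eq_div, div_le_iff₀ (by positivity)]
  exact_mod_cast hcount.trans_eq (mul_comm _ _)

lemma lowerDensPos_of_eventually_le_mul_ncard {E : Set ℕ} {u : ℕ → ℕ} {K : ℕ}
    (hu : Tendsto u atTop atTop)
    (hK : ∀ᶠ j in atTop, u (j + 1) ≤ K * (E ∩ Set.Iio (u j)).ncard) : LowerDensPos E := by
  obtain ⟨j₀, hj₀⟩ := eventually_atTop.1 hK
  refine lowerDensPos_of_le_mul_ncard (u := fun j => u (j + j₀)) (K := K)
    (hu.comp (tendsto_add_atTop_nat j₀)) fun j => ?_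
  simpa only [add_right_comm] using hj₀ (j + j₀) (Nat.le_add_left j₀ j)

def blockProgression (t m d : ℕ) : Set ℕ :=
  {n | ∃ i, n = 2 ^ t + m + i * d ∧ n + m < 2 ^ (t + 1)}

section blockProgression

variable {t t' m m' d d' n n' : ℕ}

lemma two_pow_add_le_of_mem_blockProgression (hn : n ∈ blockProgression t m d) :
    2 ^ t + m ≤ n := by
  obtain ⟨i, rfl, -⟩ := hn
  omega

lemma add_lt_of_mem_blockProgression (hn : n ∈ blockProgression t m d) :
    n + m < 2 ^ (t + 1) := by
  obtain ⟨i, -, h⟩ := hn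
  exact h

lemma add_add_lt_of_mem_blockProgression (htt' : t < t') (hn : n ∈ blockProgression t m d)
    (hn' : n' ∈ blockProgression t' m' d') : n + m + m' < n' := by
  have := Nat.pow_le_pow_right two_pos htt'
  have := add_lt_of_mem_blockProgression hn
  have := two_pow_add_le_of_mem_blockProgression hn'
  omega

lemma blockProgression_disjoint (htt' : t ≠ t') :
    Disjoint (blockProgression t m d) (blockProgression t' m' d') := by
  refine Set.disjoint_left.2 fun n hn hn' => ?_
  rcases htt'.lt_or_gt with h | h
  · have := add_add_lt_of_mem_blockProgression h hn hn'
    omega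
  · have := add_add_lt_of_mem_blockProgression h hn' hn
    omega

lemma add_le_of_mem_blockProgression (hn : n ∈ blockProgression t m d)
    (hn' : n' ∈ blockProgression t m d) (hlt : n < n') : n + d ≤ n' := by
  obtain ⟨i, rfl, -⟩ := hn
  obtain ⟨i', rfl, -⟩ := hn'
  have hii' : i + 1 ≤ i' := by
    by_contra! h
    have := Nat.mul_le_mul_right d (Nat.le_of_lt_succ h)
    omega
  have := Nat.mul_le_mul_right d hii'
  rw [add_mul, one_mul] at this
  omega

lemma le_ncard_blockProgression (hd : 0 < d) :
    (2 ^ t - 2 * m) / d ≤ (blockProgression t m d).ncard := by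
  have hmaps : ∀ i ∈ Set.Iio ((2 ^ t - 2 * m) / d), 2 ^ t + m + i * d ∈ blockProgression t m d := by
    intro i hi
    have h := Nat.mul_le_mul_right d (Nat.succ_le_of_lt (Set.mem_Iio.1 hi))
    rw [Nat.succ_mul] at h
    have := Nat.div_mul_le_self (2 ^ t - 2 * m) d
    refine ⟨i, rfl, ?_⟩
    rw [pow_succ]
    omega
  have hfin : (blockProgression t m d).Finite :=
    (Set.finite_Iio (2 ^ (t + 1))).subset fun n hn =>
      Set.mem_Iio.2 ((Nat.le_add_right n m).trans_lt (add_lt_of_mem_blockProgression hn))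
  simpa using Set.ncard_le_ncard_of_injOn _ hmaps
    (fun i _ j _ h => Nat.eq_of_mul_eq_mul_right hd (Nat.add_left_cancel h)) hfin

end blockProgression

lemma eight_mul_add_sixteen_mul_le_two_pow {b t : ℕ} (ht : 2 * b + 6 ≤ t) :
    8 * t + 16 * b ≤ 2 ^ t := by
  induction t, ht using Nat.le_induction with
  | base =>
    have := Nat.lt_two_pow_self (n := 2 * b)
    rw [pow_add]
    omega
  | succ t _ ih =>
    rw [pow_succ]
    omega

lemma two_pow_succ_le_mul_ncard_blockProgression {b t : ℕ} (hb : 0 < b) (ht : 2 * b + 6 ≤ t) :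
    2 ^ (t + 1) ≤ 16 * b * (blockProgression t (t + b) (2 * b)).ncard := by
  have := eight_mul_add_sixteen_mul_le_two_pow ht
  have := Nat.div_add_mod (2 ^ t - 2 * (t + b)) (2 * b)
  have := Nat.mod_lt (2 ^ t - 2 * (t + b)) (by omega : 0 < 2 * b)
  calc 2 ^ (t + 1) ≤ 8 * (2 * b * ((2 ^ t - 2 * (t + b)) / (2 * b))) := by
        rw [pow_succ]
        omega
    _ = 16 * b * ((2 ^ t - 2 * (t + b)) / (2 * b)) := by ring
    _ ≤ _ := Nat.mul_le_mul_left _ (le_ncard_blockProgression (by omega))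

def classBlock (p j : ℕ) : ℕ := 2 ^ p * (2 * j + 1)

lemma classBlock_ne {p q : ℕ} (hpq : p ≠ q) (j k : ℕ) : classBlock p j ≠ classBlock q k := by
  intro h
  have := congrArg (padicValNat 2) h
  simp [classBlock, padicValNat.mul, padicValNat.eq_zero_of_not_dvd, hpq] at this

lemma le_classBlock (p j : ℕ) : j ≤ classBlock p j :=
  (Nat.le_mul_of_pos_left _ (by positivity)).trans' (by omega)

lemma classBlock_succ (p j : ℕ) : classBlock p (j + 1) = classBlock p j + 2 ^ (p + 1) := by
  simp only [classBlock]
  ring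

def separatedSet (b : ℕ → ℕ) (p : ℕ) : Set ℕ :=
  ⋃ j, blockProgression (classBlock p j) (classBlock p j + b p) (2 * b p)

section separatedSet

variable {b : ℕ → ℕ} {p q n n' : ℕ}

lemma separatedSet_disjoint (hpq : p ≠ q) : Disjoint (separatedSet b p) (separatedSet b q) := by
  simp only [separatedSet, Set.disjoint_iUnion_left, Set.disjoint_iUnion_right]
  exact fun _ _ => blockProgression_disjoint (classBlock_ne hpq _ _)

lemma le_of_mem_separatedSet (hn : n ∈ separatedSet b p) : b p ≤ n := by
  obtain ⟨j, hn⟩ := Set.mem_iUnion.1 hn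
  exact (Nat.le_add_left _ _).trans <| (Nat.le_add_left _ _).trans <|
    two_pow_add_le_of_mem_blockProgression hn

lemma separatedSet_gap (hn : n ∈ separatedSet b p) (hn' : n' ∈ separatedSet b q) (hlt : n < n') :
    (p = q ∧ n + 2 * b p ≤ n') ∨ (n + b p + b q < n' ∧ n' < 2 ^ (n' - n)) := by
  obtain ⟨j, hn⟩ := Set.mem_iUnion.1 hn
  obtain ⟨k, hn'⟩ := Set.mem_iUnion.1 hn'
  rcases lt_trichotomy (classBlock p j) (classBlock q k) with h | h | h
  · have hgap := add_add_lt_of_mem_blockProgression h hn hn'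
    refine Or.inr ⟨by omega, (add_lt_of_mem_blockProgression hn').trans_le' ?_ |>.trans_le ?_⟩
    · omega
    · exact Nat.pow_le_pow_right two_pos (by omega)
  · obtain rfl : p = q := by_contra fun hpq => classBlock_ne hpq j k h
    rw [← h] at hn'
    exact Or.inl ⟨rfl, by simpa using add_le_of_mem_blockProgression hn hn' hlt⟩
  · have := add_add_lt_of_mem_blockProgression h hn' hn
    omega

lemma add_le_abs_sub_of_mem_separatedSet (hn : n ∈ separatedSet b p)
    (hn' : n' ∈ separatedSet b q) (hne : n ≠ n') : (b p + b q : ℝ) ≤ |(n : ℝ) - n'| := by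
  wlog hlt : n < n' generalizing p q n n'
  · rw [abs_sub_comm, add_comm]
    exact this hn' hn hne.symm (by omega)
  have : n + b p + b q ≤ n' := by
    rcases separatedSet_gap hn hn' hlt with ⟨rfl, h⟩ | ⟨h, -⟩ <;> omega
  have : (n : ℝ) + b p + b q ≤ n' := by exact_mod_cast this
  rw [abs_sub_comm]
  linarith [le_abs_self ((n' : ℝ) - n)]

lemma lt_abs_sub_of_two_pow_le_max (hpq : p ≠ q) (hn : n ∈ separatedSet b p)
    (hn' : n' ∈ separatedSet b q) {K : ℕ} (hK : 2 ^ K ≤ max n n') : (K : ℝ) < |(n : ℝ) - n'| := by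
  have hne : n ≠ n' := fun h => Set.disjoint_left.1 (separatedSet_disjoint hpq) hn (h ▸ hn')
  wlog hlt : n < n' generalizing p q n n'
  · rw [abs_sub_comm]
    exact this hpq.symm hn' hn (max_comm n n' ▸ hK) hne.symm (by omega)
  obtain ⟨rfl, -⟩ | ⟨-, hpow⟩ := separatedSet_gap hn hn' hlt
  · exact absurd rfl hpq
  have : K < n' - n := (Nat.pow_lt_pow_iff_right (by norm_num)).1
    ((max_eq_right hlt.le ▸ hK).trans_lt hpow)
  have : (K : ℝ) + n < n' := by exact_mod_cast (by omega : K + n < n')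
  rw [abs_sub_comm]
  linarith [le_abs_self ((n' : ℝ) - n)]

lemma lowerDensPos_separatedSet (hb : 0 < b p) : LowerDensPos (separatedSet b p) := by
  refine lowerDensPos_of_eventually_le_mul_ncard (u := fun j => 2 ^ (classBlock p j + 1))
    (K := 2 ^ 2 ^ (p + 1) * (16 * b p)) ?_ ?_
  · exact tendsto_atTop_mono (fun j => (le_classBlock p j).trans
      ((Nat.le_succ _).trans Nat.lt_two_pow_self.le)) tendsto_id
  filter_upwards [eventually_ge_atTop (2 * b p + 6)] with j hj
  have hsub : blockProgression (classBlock p j) (classBlock p j + b p) (2 * b p) ⊆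
      separatedSet b p ∩ Set.Iio (2 ^ (classBlock p j + 1)) := fun n hn =>
    ⟨Set.mem_iUnion.2 ⟨j, hn⟩,
      Set.mem_Iio.2 ((Nat.le_add_right n _).trans_lt (add_lt_of_mem_blockProgression hn))⟩
  calc 2 ^ (classBlock p (j + 1) + 1) = 2 ^ 2 ^ (p + 1) * 2 ^ (classBlock p j + 1) := by
        rw [classBlock_succ, ← pow_add]
        ring_nf
    _ ≤ 2 ^ 2 ^ (p + 1) * (16 * b p *
          (blockProgression (classBlock p j) (classBlock p j + b p) (2 * b p)).ncard) :=
        Nat.mul_le_mul_left _ (two_pow_succ_le_mul_ncard_blockProgression hb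
          (hj.trans (le_classBlock p j)))
    _ ≤ _ := by
        rw [← mul_assoc]
        exact Nat.mul_le_mul_left _ (Set.ncard_le_ncard hsub
          ((Set.finite_Iio _).subset Set.inter_subset_right))

end separatedSet

/-- **Theorem (separated sets of positive lower density).** Given any sequence `(a p)` of
positive real numbers, there is a sequence `(A p)` of pairwise disjoint subsets of `ℕ` such
that: each `A p` has positive lower density; `min A p ≥ a p` and `|n − n′| ≥ a p + a q`
whenever `n ≠ n′`, `(n, n′) ∈ A p × A q`; and for every `C > 0` there is `κ > 0` such that
`|n − n′| ≥ C` whenever `(n, n′) ∈ A p × A q` with `p ≠ q` and `max n n′ ≥ κ`. -/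
theorem exists_separated_sets_of_positive_lower_density
    (a : ℕ → ℝ) (ha : ∀ p : ℕ, 1 ≤ p → 0 < a p) :
    ∃ A : ℕ → Set ℕ,
      (∀ p q : ℕ, 1 ≤ p → 1 ≤ q → p ≠ q → Disjoint (A p) (A q)) ∧
      (∀ p : ℕ, 1 ≤ p → LowerDensPos (A p)) ∧
      (∀ p : ℕ, 1 ≤ p → ∀ n ∈ A p, a p ≤ (n : ℝ)) ∧
      (∀ p q : ℕ, 1 ≤ p → 1 ≤ q → ∀ n ∈ A p, ∀ n' ∈ A q, n ≠ n' →
        a p + a q ≤ |(n : ℝ) - (n' : ℝ)|) ∧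
      (∀ C : ℝ, 0 < C → ∃ κ : ℝ, 0 < κ ∧
        ∀ p q : ℕ, 1 ≤ p → 1 ≤ q → p ≠ q → ∀ n ∈ A p, ∀ n' ∈ A q,
          κ ≤ (max n n' : ℕ) → C ≤ |(n : ℝ) - (n' : ℝ)|) := by
  refine ⟨separatedSet fun p => ⌈a p⌉₊, fun p q _ _ => separatedSet_disjoint,
    fun p hp => lowerDensPos_separatedSet (Nat.ceil_pos.2 (ha p hp)),
    fun p _ n hn => (Nat.le_ceil _).trans (by exact_mod_cast le_of_mem_separatedSet hn),
    fun p q _ _ n hn n' hn' hne => ?_,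
    fun C _ => ⟨2 ^ ⌈C⌉₊, by positivity, fun p q _ _ hpq n hn n' hn' hκ => ?_⟩⟩
  · exact (add_le_add (Nat.le_ceil _) (Nat.le_ceil _)).trans
      (add_le_abs_sub_of_mem_separatedSet hn hn' hne)
  · exact (Nat.le_ceil C).trans
      (lt_abs_sub_of_two_pow_le_max hpq hn hn' (by exact_mod_cast hκ)).le
end
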